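/- arXiv:1704.03148 — 9 statements merged into one kernel-verified Lean document; each statement's English description precedes it below -/
import Mathlib

section
/- Let F = f_1 ≥ f_2 ≥ … ≥ f_n be the (decreasingly ordered) coordinatewise sum of k tree degree sequences on n vertices. Then for every index s with 2k ≤ s ≤ n, the Erdős–Gallai inequality holds: ∑_{i=1}^{s} f_i ≤ s(s−1) + ∑_{j=s+1}^{n} min{s, f_j}. -/
/-!
A sum of `k` tree degree sequences on `n` vertices has every entry at least `k` and total
`2k(n - 1)`. Let `S` be the first `s` vertices and `T` the rest. Each vertex of `T` takes at least
`k` out of the total and contributes at least `min s k = k` to the right-hand side, so the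
left-hand side exceeds `k |T|` by at most `2k(|S| - 1) ≤ s(s - 1)`.
-/

def TreeDegSeq {n : ℕ} (d : Fin n → ℕ) : Prop :=
  (∀ v, 1 ≤ d v) ∧ (∑ v, d v) + 2 = 2 * n

open Finset

theorem le_sum_of_forall_treeDegSeq {k n : ℕ} {D : Fin k → Fin n → ℕ}
    (hD : ∀ i, TreeDegSeq (D i)) (v : Fin n) : k ≤ ∑ i, D i v := by
  simpa using card_nsmul_le_sum univ (fun i => D i v) 1 fun i _ => (hD i).1 v

theorem sum_sum_add_eq_of_forall_treeDegSeq {k n : ℕ} {D : Fin k → Fin n → ℕ}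
    (hD : ∀ i, TreeDegSeq (D i)) : ∑ v, ∑ i, D i v + 2 * k = 2 * k * n := by
  rw [sum_comm]
  calc ∑ i, ∑ v, D i v + 2 * k = ∑ i, (∑ v, D i v + 2) := by
        rw [sum_add_distrib]; simp [mul_comm]
    _ = ∑ _i : Fin k, 2 * n := sum_congr rfl fun i _ => (hD i).2
    _ = 2 * k * n := by simp [mul_assoc, mul_left_comm]

theorem sum_le_mul_pred_add_sum_compl_min {α : Type*} [Fintype α] [DecidableEq α]
    {f : α → ℕ} {k s : ℕ} (hmin : ∀ v, k ≤ f v)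
    (hsum : ∑ v, f v + 2 * k = 2 * k * Fintype.card α) (hks : 2 * k ≤ s)
    (S : Finset α) (hS : #S ≤ s) :
    ∑ i ∈ S, f i ≤ s * (s - 1) + ∑ j ∈ Sᶜ, min s (f j) := by
  have hsplit : ∑ i ∈ S, f i + ∑ j ∈ Sᶜ, f j = ∑ v, f v := sum_add_sum_compl S f
  have hcard : #S + #Sᶜ = Fintype.card α := card_add_card_compl S
  have htail : #Sᶜ * k ≤ ∑ j ∈ Sᶜ, f j := by
    simpa using card_nsmul_le_sum Sᶜ f k fun v _ => hmin v
  have htail_min : #Sᶜ * k ≤ ∑ j ∈ Sᶜ, min s (f j) := by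
    simpa using card_nsmul_le_sum Sᶜ _ k fun v _ => le_min (by omega) (hmin v)
  have hhead : 2 * k * (#S - 1) ≤ s * (s - 1) :=
    Nat.mul_le_mul hks (Nat.sub_le_sub_right hS 1)
  rw [← hcard, ← hsplit] at hsum
  rcases Nat.eq_zero_or_pos #S with h0 | hpos
  · simp [card_eq_zero.mp h0]
  · obtain ⟨c, hc⟩ : ∃ c, #S = c + 1 := ⟨#S - 1, by omega⟩
    rw [hc, Nat.add_sub_cancel] at hhead
    rw [hc] at hsum
    nlinarith

theorem eg_inequality_for_large_s_general {k n : ℕ} (D : Fin k → Fin n → ℕ)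
    (hD : ∀ i, TreeDegSeq (D i)) (f : Fin n → ℕ)
    (hperm : ∃ σ : Equiv.Perm (Fin n), ∀ v, f v = ∑ i, D i (σ v))
    (s : ℕ) (hs1 : 2 * k ≤ s) :
    ∑ i ∈ Finset.univ.filter (fun i : Fin n => (i : ℕ) < s), f i ≤
      s * (s - 1) + ∑ j ∈ Finset.univ.filter (fun j : Fin n => s ≤ (j : ℕ)), min s (f j) := by
  obtain ⟨σ, hσ⟩ := hperm
  have hmin : ∀ v, k ≤ f v := fun v => hσ v ▸ le_sum_of_forall_treeDegSeq hD (σ v)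
  have hsum : ∑ v, f v + 2 * k = 2 * k * Fintype.card (Fin n) := by
    simp_rw [hσ, Fintype.card_fin]
    rw [Equiv.sum_comp σ fun v => ∑ i, D i v]
    exact sum_sum_add_eq_of_forall_treeDegSeq hD
  have hS : #{i : Fin n | (i : ℕ) < s} ≤ s := by
    rw [Fin.card_filter_val_lt]; exact min_le_right n s
  simpa only [compl_filter, not_lt] using sum_le_mul_pred_add_sum_compl_min hmin hsum hs1 _ hS

/-- Let `F = f 0 ≥ f 1 ≥ … ≥ f (n-1)` be the decreasingly ordered coordinatewise sum of
`k` tree degree sequences on `n` vertices. Then for every `s` with `2k ≤ s ≤ n`, the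
Erdős–Gallai inequality `∑_{i<s} f i ≤ s(s-1) + ∑_{j≥s} min s (f j)` holds. -/
theorem eg_inequality_for_large_s {k n : ℕ} (D : Fin k → Fin n → ℕ)
    (hD : ∀ i, TreeDegSeq (D i)) (f : Fin n → ℕ)
    (hsorted : ∀ i j : Fin n, i ≤ j → f j ≤ f i)
    (hperm : ∃ σ : Equiv.Perm (Fin n), ∀ v, f v = ∑ i, D i (σ v))
    (s : ℕ) (hs1 : 2 * k ≤ s) (hs2 : s ≤ n) :
    ∑ i ∈ Finset.univ.filter (fun i : Fin n => (i : ℕ) < s), f i ≤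
      s * (s - 1) + ∑ j ∈ Finset.univ.filter (fun j : Fin n => s ≤ (j : ℕ)), min s (f j) :=
  eg_inequality_for_large_s_general D hD f hperm s hs1
end

section
/- Let D_1, …, D_k be tree degree sequences on a common set of n vertices without common leaves. Then their coordinatewise sum F = f_1, …, f_n is a graphical degree sequence, i.e., there exists a simple graph whose degree sequence is exactly F. -/
/-- The degree sequences `D 0, …, D (k-1)` have no common leaves: if a vertex has degree `1`
in one of them, it has degree `> 1` in all the others. -/
def NoCommonLeaves {k n : ℕ} (D : Fin k → Fin n → ℕ) : Prop :=
  ∀ (v : Fin n) (i j : Fin k), i ≠ j → D i v = 1 → 2 ≤ D j v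

/-!
Write `f = ∑ i, D i` and `k = j + 1`. Every tree has at least two leaves and no vertex is a leaf
of two trees, so `2k ≤ n` and `f v ≥ 2j + 1` for all `v`, while `∑ v, f v = 2k (n - 1)`. Hence `f`
is majorized by the sequence with one entry `n - 1` and all others `2j + 1`, which is graphical:
join one vertex to a `2j`-regular circulant graph on the other `n - 1 > 2j` vertices.

Graphical sequences are closed downwards under majorization. If `f ≺ g` and `f` is not a
rearrangement of `g`, some unit transfer from an entry `g u` to an entry `g w ≤ g u - 2` keeps
`f ≺ g`; in a graph realizing `g` such a transfer is realized by re-routing an edge `ux` to `wx`.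
-/

open Finset SimpleGraph

def Graphical {V : Type*} (f : V → ℕ) : Prop :=
  ∃ G : SimpleGraph V, ∀ v, (G.neighborSet v).ncard = f v

lemma Graphical.comp_equiv {V W : Type*} {g : W → ℕ} (hg : Graphical g) (e : V ≃ W) :
    Graphical (g ∘ e) := by
  obtain ⟨G, hG⟩ := hg
  refine ⟨G.comap e, fun v => ?_⟩
  rw [Function.comp_apply, ← hG,
    ← Set.ncard_preimage_of_injective_subset_range e.injective (by simp)]
  rfl

lemma Graphical.option {V : Type*} [Finite V] {g : V → ℕ} (hg : Graphical g) :
    Graphical (fun o : Option V => o.elim (Nat.card V) (g · + 1)) := by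
  obtain ⟨G, hG⟩ := hg
  refine ⟨G.map Function.Embedding.some ⊔ starGraph none, ?_⟩
  rintro (_ | v)
  · have : (G.map Function.Embedding.some ⊔ starGraph none).neighborSet none =
        Set.range some := by
      ext (_ | w) <;> simp
    rw [this, Set.ncard_range_of_injective (Option.some_injective V)]
    rfl
  · have : (G.map Function.Embedding.some ⊔ starGraph none).neighborSet (some v) =
        insert none (some '' G.neighborSet v) := by
      ext (_ | w)
      · simp
      · simpa [map_adj'] using @Adj.ne _ G v w
    rw [this, Set.ncard_insert_of_notMem (by simp),
      Set.ncard_image_of_injective _ (Option.some_injective V), hG]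
    rfl

section Circulant

lemma ncard_neighborSet_circulantGraph {G : Type*} [AddGroup G] {s : Set G} (hs : -s = s)
    (h0 : (0 : G) ∉ s) (a : G) : ((circulantGraph s).neighborSet a).ncard = s.ncard := by
  have hneg (x : G) : -x ∈ s ↔ x ∈ s := by rw [← Set.mem_neg, hs]
  have : (circulantGraph s).neighborSet a = (· + a) '' s := by
    ext b
    rw [mem_neighborSet, circulantGraph_adj, ← hneg (a - b), neg_sub, or_self]
    constructor
    · rintro ⟨-, h⟩
      exact ⟨b - a, h, sub_add_cancel b a⟩
    · rintro ⟨x, hx, rfl⟩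
      rw [add_sub_cancel_right]
      exact ⟨fun h => h0 (add_eq_right.mp h.symm ▸ hx), hx⟩
  rw [this, Set.ncard_image_of_injective _ (add_left_injective a)]

lemma intCast_injOn_Icc {m j : ℕ} (h : 2 * j < m) :
    Set.InjOn (Int.cast : ℤ → ZMod m) (Set.Icc (-j : ℤ) j) := by
  intro a ha b hb hab
  rw [ZMod.intCast_eq_intCast_iff_dvd_sub] at hab
  have := Int.eq_zero_of_abs_lt_dvd hab (by rw [abs_lt]; simp only [Set.mem_Icc] at ha hb; omega)
  omega

lemma graphical_const_two_mul_zmod {m j : ℕ} (h : 2 * j < m) :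
    Graphical (fun _ : ZMod m => 2 * j) := by
  set T : Set (ZMod m) := Int.cast '' Set.Icc (-j : ℤ) j
  have hT : -T = T := by
    ext x
    simp only [T, Set.mem_neg, Set.mem_image, Set.mem_Icc]
    constructor
    · rintro ⟨i, hi, hix⟩
      exact ⟨-i, by omega, by push_cast; rw [hix, neg_neg]⟩
    · rintro ⟨i, hi, rfl⟩
      exact ⟨-i, by omega, by push_cast; rfl⟩
  have hT₀ : -(T \ {0}) = T \ {0} := by
    ext x
    rw [Set.mem_neg, Set.mem_sdiff, Set.mem_sdiff, ← Set.mem_neg, hT]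
    simp
  have h0T : (0 : ZMod m) ∈ T := ⟨0, by simp, Int.cast_zero⟩
  have hcard : T.ncard = 2 * j + 1 := by
    rw [(intCast_injOn_Icc h).ncard_image, ← Finset.coe_Icc, Set.ncard_coe_finset, Int.card_Icc]
    omega
  refine ⟨circulantGraph (T \ {0}), fun a => ?_⟩
  rw [ncard_neighborSet_circulantGraph hT₀ (fun h => h.2 rfl),
    Set.ncard_sdiff_singleton_of_mem h0T, hcard]
  rfl

variable {V : Type*} [Fintype V]

lemma graphical_const_two_mul {j : ℕ} (h : 2 * j < Fintype.card V) :
    Graphical (fun _ : V => 2 * j) := by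
  have : NeZero (Fintype.card V) := ⟨by omega⟩
  exact (graphical_const_two_mul_zmod h).comp_equiv
    (Fintype.equivOfCardEq (ZMod.card (Fintype.card V)).symm)

lemma graphical_hub [DecidableEq V] (v₀ : V) {j : ℕ} (h : 2 * j + 1 < Fintype.card V) :
    Graphical (fun v => if v = v₀ then Fintype.card V - 1 else 2 * j + 1) := by
  have hreg := graphical_const_two_mul (V := {v // v ≠ v₀}) (j := j) (by simp; omega)
  convert hreg.option.comp_equiv (Equiv.optionSubtypeNe v₀).symm using 1
  funext v
  by_cases hv : v = v₀
  · subst hv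
    simp
  · simp [hv, Equiv.optionSubtypeNe_symm_of_ne hv]

end Circulant

def transfer {V : Type*} [DecidableEq V] (g : V → ℕ) (u w : V) : V → ℕ :=
  fun v => g v - (if v = u then 1 else 0) + (if v = w then 1 else 0)

section Rerouting

variable {V : Type*} [Finite V] {G : SimpleGraph V}

lemma exists_adj_not_adj_of_ncard_lt {u w : V}
    (h : (G.neighborSet w).ncard + 1 < (G.neighborSet u).ncard) :
    ∃ x, G.Adj u x ∧ ¬G.Adj w x ∧ x ≠ w := by
  by_contra! hcon
  have hsub : G.neighborSet u \ {w} ⊆ G.neighborSet w := fun x ⟨hux, hxw⟩ => by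
    by_contra hwx
    exact hxw (hcon x hux hwx)
  have := Set.ncard_le_ncard hsub
  have := Set.ncard_le_ncard_sdiff_add_ncard (G.neighborSet u) {w}
  rw [Set.ncard_singleton] at this
  omega

variable [DecidableEq V]

lemma ncard_neighborSet_sup_edge {a b : V} (hab : a ≠ b) (h : ¬G.Adj a b) (v : V) :
    ((G ⊔ edge a b).neighborSet v).ncard =
      (G.neighborSet v).ncard + if v = a ∨ v = b then 1 else 0 := by
  by_cases hva : v = a
  · subst hva
    have : (G ⊔ edge v b).neighborSet v = insert b (G.neighborSet v) := by
      ext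
      simp only [sup_adj, edge_adj, mem_neighborSet, Set.mem_insert_iff]
      grind
    rw [this, Set.ncard_insert_of_notMem (show b ∉ G.neighborSet v from h), if_pos (Or.inl rfl)]
  by_cases hvb : v = b
  · subst hvb
    have : (G ⊔ edge a v).neighborSet v = insert a (G.neighborSet v) := by
      ext
      simp only [sup_adj, edge_adj, mem_neighborSet, Set.mem_insert_iff]
      grind
    rw [this, Set.ncard_insert_of_notMem (fun h' => h h'.symm), if_pos (Or.inr rfl)]
  have : (G ⊔ edge a b).neighborSet v = G.neighborSet v := by
    ext
    simp [edge_adj, hva, hvb]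
  rw [this, if_neg (by tauto), add_zero]

lemma ncard_neighborSet_sdiff_edge {a b : V} (h : G.Adj a b) (v : V) :
    ((G \ edge a b).neighborSet v).ncard + (if v = a ∨ v = b then 1 else 0) =
      (G.neighborSet v).ncard := by
  rw [← ncard_neighborSet_sup_edge h.ne (by simp [edge_adj, h.ne]),
    sdiff_sup_cancel (by simp [h, h.ne])]

lemma Graphical.transfer {g : V → ℕ} (hg : Graphical g) {u w : V} (h : g w + 2 ≤ g u) :
    Graphical (transfer g u w) := by
  obtain ⟨G, hG⟩ := hg
  obtain ⟨x, hux, hwx, hxw⟩ := exists_adj_not_adj_of_ncard_lt (G := G) (u := u) (w := w)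
    (by rw [hG, hG]; omega)
  have hxu : x ≠ u := (G.ne_of_adj hux).symm
  have hx : 1 ≤ g x := by
    rw [← hG]
    exact (Set.ncard_pos).mpr ⟨u, hux.symm⟩
  refine ⟨G \ edge u x ⊔ edge w x, fun v => ?_⟩
  have hadd := ncard_neighborSet_sup_edge (G := G \ edge u x) hxw.symm (by simp [hwx]) v
  have hdel := ncard_neighborSet_sdiff_edge hux v
  rw [hG] at hdel
  change _ = g v - _ + _
  rcases eq_or_ne v x with rfl | hvx
  · simp only [hxu, hxw, or_true, if_false] at hadd hdel ⊢
    omega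
  · simp only [hvx, or_false] at hadd hdel
    split_ifs at hadd hdel ⊢ <;> subst_vars <;> omega

end Rerouting

lemma sum_tsub_add_card_mul {V : Type*} {f : V → ℕ} (s : Finset V) {a : ℕ}
    (h : ∀ v ∈ s, a ≤ f v) : ∑ v ∈ s, (f v - a) + #s * a = ∑ v ∈ s, f v := by
  rw [← smul_eq_mul, ← sum_const, ← sum_add_distrib]
  exact sum_congr rfl fun v hv => Nat.sub_add_cancel (h v hv)

section Majorization

variable {V : Type*} [Fintype V] {f g : V → ℕ}

/-- Truncated subtraction makes this `∑ v, max (f v - r) 0`. -/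
def excess (f : V → ℕ) (r : ℕ) : ℕ := ∑ v, (f v - r)

/-- Majorization of `f` by `g`, phrased through excesses so that neither needs to be sorted. -/
def IsMajorizedBy (f g : V → ℕ) : Prop :=
  ∑ v, f v = ∑ v, g v ∧ ∀ r, excess f r ≤ excess g r

lemma excess_zero (f : V → ℕ) : excess f 0 = ∑ v, f v := by simp [excess]

lemma excess_eq_zero {r : ℕ} (h : ∀ v, f v ≤ r) : excess f r = 0 :=
  sum_eq_zero fun v _ => Nat.sub_eq_zero_of_le (h v)

lemma excess_eq_zero_of_sum_le {r : ℕ} (h : ∑ v, f v ≤ r) : excess f r = 0 :=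
  excess_eq_zero fun v => (single_le_sum (by simp) (mem_univ v)).trans h

lemma excess_eq_excess_succ_add_card (f : V → ℕ) (r : ℕ) :
    excess f r = excess f (r + 1) + #{v | r < f v} := by
  rw [excess, excess, card_filter, ← sum_add_distrib]
  refine sum_congr rfl fun v _ => ?_
  split_ifs <;> omega

lemma card_filter_lt_le_card_filter_lt (f : V → ℕ) {r s : ℕ} (h : r ≤ s) :
    #{v | s < f v} ≤ #{v | r < f v} :=
  card_le_card fun v => by simp only [mem_filter, mem_univ, true_and]; omega

lemma card_filter_le_eq_card_filter_eq_add (f : V → ℕ) (s : ℕ) :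
    #{v | s ≤ f v} = #{v | f v = s} + #{v | s < f v} := by
  simp only [card_filter, ← sum_add_distrib]
  refine sum_congr rfl fun v _ => ?_
  split_ifs <;> omega

lemma exists_apply_eq_of_card_lt {s : ℕ} (h : #{v | s < g v} < #{v | s ≤ g v}) :
    ∃ v, g v = s := by
  rw [card_filter_le_eq_card_filter_eq_add] at h
  obtain ⟨v, hv⟩ := card_pos.mp (show 0 < #{v | g v = s} by omega)
  exact ⟨v, (mem_filter.mp hv).2⟩

lemma card_filter_le_eq_of_excess_eq {s : ℕ} (h : ∀ t ≤ s, excess f t = excess g t) :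
    #{v | s ≤ f v} = #{v | s ≤ g v} := by
  rcases s with _ | t
  · simp
  · have := excess_eq_excess_succ_add_card f t
    have := excess_eq_excess_succ_add_card g t
    have := h t (by omega)
    have := h (t + 1) le_rfl
    simp only [Nat.add_one_le_iff]
    omega

lemma exists_equiv_eq_comp_of_excess_eq (h : ∀ r, excess f r = excess g r) :
    ∃ e : V ≃ V, f = g ∘ e := by
  have hfib (y : ℕ) : Fintype.card {v // f v = y} = Fintype.card {v // g v = y} := by
    have hle := card_filter_le_eq_of_excess_eq (s := y) fun t _ => h t
    have := excess_eq_excess_succ_add_card f y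
    have := excess_eq_excess_succ_add_card g y
    have := h y
    have := h (y + 1)
    rw [card_filter_le_eq_card_filter_eq_add, card_filter_le_eq_card_filter_eq_add] at hle
    rw [Fintype.card_subtype, Fintype.card_subtype]
    omega
  exact ⟨Equiv.ofFiberEquiv fun y => Fintype.equivOfCardEq (hfib y),
    funext fun v => (Equiv.ofFiberEquiv_map _ v).symm⟩

lemma Graphical.of_excess_eq (hg : Graphical g) (h : ∀ r, excess f r = excess g r) :
    Graphical f := by
  obtain ⟨e, rfl⟩ := exists_equiv_eq_comp_of_excess_eq h
  exact hg.comp_equiv e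

lemma exists_apply_eq_succ_of_excess {r : ℕ} (h₀ : excess f r < excess g r)
    (h₁ : excess f (r + 1) = excess g (r + 1)) (h₂ : excess f (r + 2) ≤ excess g (r + 2)) :
    ∃ u, g u = r + 1 := by
  refine exists_apply_eq_of_card_lt ?_
  replace h₂ : excess f (r + 1 + 1) ≤ excess g (r + 1 + 1) := h₂
  have := excess_eq_excess_succ_add_card f r
  have := excess_eq_excess_succ_add_card g r
  have := excess_eq_excess_succ_add_card f (r + 1)
  have := excess_eq_excess_succ_add_card g (r + 1)
  have := card_filter_lt_le_card_filter_lt f (Nat.le_add_right r 1)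
  simp only [Nat.add_one_le_iff]
  omega

lemma exists_apply_eq_of_excess {s : ℕ} (h₀ : ∀ t ≤ s, excess f t = excess g t)
    (h₁ : excess f (s + 1) < excess g (s + 1)) : ∃ w, g w = s := by
  refine exists_apply_eq_of_card_lt ?_
  have := excess_eq_excess_succ_add_card f s
  have := excess_eq_excess_succ_add_card g s
  have := card_filter_le_eq_of_excess_eq h₀
  have := card_filter_le_eq_card_filter_eq_add f s
  have := h₀ s le_rfl
  omega

lemma add_sum_erase_tsub_add_card_mul [DecidableEq V] {a : ℕ} (hf : ∀ v, a ≤ f v) (v₁ : V) :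
    f v₁ + (∑ v ∈ univ.erase v₁, (f v - a) + (Fintype.card V - 1) * a) = ∑ v, f v := by
  rw [← card_univ, ← card_erase_of_mem (mem_univ v₁),
    sum_tsub_add_card_mul _ fun v _ => hf v, add_sum_erase _ _ (mem_univ v₁)]

lemma excess_le_of_sum_eq {a b r : ℕ} (hf : ∀ v, a ≤ f v)
    (hsum : ∑ v, f v = b + (Fintype.card V - 1) * a) (hr : a ≤ r) : excess f r ≤ b - r := by
  classical
  by_cases hex : ∃ v₁, r < f v₁
  · obtain ⟨v₁, hv₁⟩ := hex
    have hle : ∑ v ∈ univ.erase v₁, (f v - r) ≤ ∑ v ∈ univ.erase v₁, (f v - a) :=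
      sum_le_sum fun v _ => Nat.sub_le_sub_left hr _
    have := add_sum_erase_tsub_add_card_mul hf v₁
    rw [excess, ← add_sum_erase _ _ (mem_univ v₁)]
    omega
  · push Not at hex
    rw [excess_eq_zero hex]
    exact Nat.zero_le _

lemma isMajorizedBy_hub [DecidableEq V] {a b : ℕ} (v₀ : V) (hf : ∀ v, a ≤ f v)
    (hsum : ∑ v, f v = b + (Fintype.card V - 1) * a) :
    IsMajorizedBy f (fun v => if v = v₀ then b else a) := by
  set g : V → ℕ := fun v => if v = v₀ then b else a
  have hg : ∑ v, g v = b + (Fintype.card V - 1) * a := by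
    rw [← add_sum_erase _ _ (mem_univ v₀), sum_congr rfl fun v hv => if_neg (ne_of_mem_erase hv),
      sum_const, card_erase_of_mem (mem_univ v₀), card_univ, smul_eq_mul]
    simp [g]
  have hab : a ≤ b := by
    have := add_sum_erase_tsub_add_card_mul hf v₀
    have := hf v₀
    omega
  refine ⟨hg.symm ▸ hsum, fun r => ?_⟩
  rcases le_total r a with hr | hr
  · have := sum_tsub_add_card_mul univ fun v _ => hr.trans (hf v)
    have := sum_tsub_add_card_mul (f := g) (a := r) univ fun v _ => by
      unfold g
      split_ifs <;> omega
    unfold excess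
    omega
  · calc excess f r ≤ b - r := excess_le_of_sum_eq hf hsum hr
      _ = g v₀ - r := by simp [g]
      _ ≤ excess g r :=
        single_le_sum (f := fun v => g v - r) (fun _ _ => Nat.zero_le _) (mem_univ v₀)

section Transfer

variable [DecidableEq V] {u w : V}

lemma sum_transfer (hu : 1 ≤ g u) : ∑ v, transfer g u w v = ∑ v, g v := by
  have key (v : V) :
      transfer g u w v + (if v = u then 1 else 0) = g v + (if v = w then 1 else 0) := by
    unfold transfer
    split_ifs <;> subst_vars <;> omega
  have := Fintype.sum_congr _ _ key
  simp only [sum_add_distrib, sum_ite_eq', mem_univ, if_true] at this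
  omega

lemma excess_transfer (huw : u ≠ w) (r : ℕ) :
    excess (transfer g u w) r + (if r < g u then 1 else 0) =
      excess g r + (if r ≤ g w then 1 else 0) := by
  have key (v : V) : (transfer g u w v - r) + (if v = u ∧ r < g u then 1 else 0) =
      (g v - r) + (if v = w ∧ r ≤ g w then 1 else 0) := by
    unfold transfer
    split_ifs <;> subst_vars <;> simp_all <;> omega
  unfold excess
  simpa only [sum_add_distrib, ite_and, sum_ite_eq', mem_univ, if_true] using
    Fintype.sum_congr _ _ key

lemma sum_range_excess_transfer_lt (h : g w + 2 ≤ g u) {N : ℕ} (hN : g u ≤ N) :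
    ∑ r ∈ range N, excess (transfer g u w) r < ∑ r ∈ range N, excess g r := by
  have huw : u ≠ w := by rintro rfl; omega
  have := excess_transfer (g := g) huw
  refine sum_lt_sum (fun r _ => ?_) ⟨g w + 1, mem_range.mpr (by omega), ?_⟩
  · have := this r
    split_ifs at this <;> omega
  · have := this (g w + 1)
    split_ifs at this <;> omega

/-- `g u` lies just above, and `g w` just below, the first maximal run `[s + 1, r₂]` of strict
inequalities `excess f r < excess g r`. -/
lemma IsMajorizedBy.exists_transfer (hfg : IsMajorizedBy f g)
    (hlt : ∃ r, excess f r < excess g r) :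
    ∃ u w, g w + 2 ≤ g u ∧ IsMajorizedBy f (transfer g u w) := by
  obtain ⟨hsum, hle⟩ := hfg
  obtain ⟨s, hs⟩ : ∃ s, Nat.find hlt = s + 1 := Nat.exists_eq_succ_of_ne_zero fun h0 => by
    have := Nat.find_spec hlt
    rw [h0, excess_zero, excess_zero, hsum] at this
    exact lt_irrefl _ this
  have hbelow : ∀ t ≤ s, excess f t = excess g t := fun t ht =>
    (hle t).antisymm (not_lt.mp (Nat.find_min hlt (by omega)))
  have hs₁ : excess f (s + 1) < excess g (s + 1) := hs ▸ Nat.find_spec hlt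
  have hend : ∃ r, s + 1 ≤ r ∧ excess f (r + 1) = excess g (r + 1) := by
    refine ⟨∑ v, g v, ?_, ?_⟩
    · by_contra! h
      rw [excess_eq_zero_of_sum_le h.le] at hs₁
      omega
    · rw [excess_eq_zero_of_sum_le (by omega), excess_eq_zero_of_sum_le (by omega)]
  obtain ⟨hr₂, heq⟩ := Nat.find_spec hend
  set r₂ := Nat.find hend
  have hstrict : ∀ t, s + 1 ≤ t → t ≤ r₂ → excess f t < excess g t := by
    intro t ht₁ ht₂
    rcases ht₁.eq_or_lt with rfl | ht₁
    · exact hs₁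
    · obtain ⟨t, rfl⟩ := Nat.exists_eq_add_one_of_ne_zero (by omega : t ≠ 0)
      exact (hle _).lt_of_ne fun h => Nat.find_min hend (by omega) ⟨by omega, h⟩
  obtain ⟨u, hu⟩ := exists_apply_eq_succ_of_excess (hstrict r₂ hr₂ le_rfl) heq (hle _)
  obtain ⟨w, hw⟩ := exists_apply_eq_of_excess hbelow hs₁
  have huw : u ≠ w := by rintro rfl; omega
  refine ⟨u, w, by omega, ?_, fun r => ?_⟩
  · rw [sum_transfer (by omega), hsum]
  · have := excess_transfer (g := g) huw r
    have := hle r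
    have := hstrict r
    split_ifs at * <;> omega

theorem Graphical.of_isMajorizedBy (hg : Graphical g) (hfg : IsMajorizedBy f g) :
    Graphical f := by
  induction hM : ∑ r ∈ range (∑ v, f v), excess g r using Nat.strong_induction_on
    generalizing g with
  | _ M ih =>
  by_cases hlt : ∃ r, excess f r < excess g r
  · obtain ⟨u, w, hgap, hfg'⟩ := hfg.exists_transfer hlt
    have hu : g u ≤ ∑ v, f v := hfg.1 ▸ single_le_sum (by simp) (mem_univ u)
    exact ih _ (hM ▸ sum_range_excess_transfer_lt hgap hu) (hg.transfer hgap) hfg' rfl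
  · simp only [not_exists, not_lt] at hlt
    exact hg.of_excess_eq fun r => (hfg.2 r).antisymm (hlt r)

end Transfer

end Majorization

lemma two_mul_card_le_sum_add_card_eq_one {ι : Type*} [Fintype ι] {d : ι → ℕ}
    (h : ∀ i, 1 ≤ d i) : 2 * Fintype.card ι ≤ ∑ i, d i + #{i | d i = 1} :=
  calc 2 * Fintype.card ι = ∑ _i : ι, 2 := by simp [mul_comm]
    _ ≤ ∑ i, (d i + if d i = 1 then 1 else 0) :=
      sum_le_sum fun i _ => by have := h i; split_ifs <;> omega
    _ = ∑ i, d i + #{i | d i = 1} := by rw [sum_add_distrib, card_filter]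

lemma TreeDegSeq.two_le_card_leaves {n : ℕ} {d : Fin n → ℕ} (hd : TreeDegSeq d) :
    2 ≤ #{v | d v = 1} := by
  have := two_mul_card_le_sum_add_card_eq_one hd.1
  have := hd.2
  rw [Fintype.card_fin] at *
  omega

section TreeDegSeq

variable {k n : ℕ} {D : Fin k → Fin n → ℕ}

lemma NoCommonLeaves.card_eq_one_le_one (h : NoCommonLeaves D) (v : Fin n) :
    #{i | D i v = 1} ≤ 1 :=
  card_le_one.mpr fun i hi j hj => by
    by_contra hij
    have := h v i j hij (mem_filter.mp hi).2
    have := (mem_filter.mp hj).2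
    omega

lemma NoCommonLeaves.two_mul_le_sum_add_one (h : NoCommonLeaves D)
    (hD : ∀ i, TreeDegSeq (D i)) (v : Fin n) : 2 * k ≤ ∑ i, D i v + 1 := by
  have := two_mul_card_le_sum_add_card_eq_one fun i => (hD i).1 v
  have := h.card_eq_one_le_one v
  rw [Fintype.card_fin] at *
  omega

lemma NoCommonLeaves.two_mul_le (h : NoCommonLeaves D) (hD : ∀ i, TreeDegSeq (D i)) :
    2 * k ≤ n :=
  calc 2 * k = ∑ _i : Fin k, 2 := by simp [mul_comm]
    _ ≤ ∑ i, #{v | D i v = 1} := sum_le_sum fun i _ => (hD i).two_le_card_leaves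
    _ = ∑ v, #{i | D i v = 1} := by simp only [card_filter]; exact sum_comm
    _ ≤ ∑ _v : Fin n, 1 := sum_le_sum fun v _ => h.card_eq_one_le_one v
    _ = n := by simp

lemma sum_sum_add_two_mul (hD : ∀ i, TreeDegSeq (D i)) :
    ∑ v, ∑ i, D i v + 2 * k = 2 * k * n := by
  rw [sum_comm]
  calc ∑ i, ∑ v, D i v + 2 * k = ∑ i, (∑ v, D i v + 2) := by simp [sum_add_distrib, mul_comm]
    _ = ∑ _i : Fin k, 2 * n := sum_congr rfl fun i _ => (hD i).2
    _ = 2 * k * n := by simp; ring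

end TreeDegSeq

/-- The coordinatewise sum of tree degree sequences without common leaves is graphical:
there is a simple graph whose degree at each vertex `v` is `∑ i, D i v`. -/
theorem sum_of_tree_degree_sequences_graphical {k n : ℕ} (D : Fin k → Fin n → ℕ)
    (hD : ∀ i, TreeDegSeq (D i)) (hleaves : NoCommonLeaves D) :
    ∃ G : SimpleGraph (Fin n), ∀ v, (G.neighborSet v).ncard = ∑ i, D i v := by
  rcases k with _ | j
  · exact ⟨⊥, by simp⟩
  have hn : 2 * (j + 1) ≤ n := hleaves.two_mul_le hD
  have hlow (v : Fin n) : 2 * j + 1 ≤ ∑ i, D i v := by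
    have := hleaves.two_mul_le_sum_add_one hD v
    omega
  have hsum : ∑ v, ∑ i, D i v = (n - 1) + (n - 1) * (2 * j + 1) := by
    have := sum_sum_add_two_mul hD
    obtain ⟨m, rfl⟩ : ∃ m, n = m + 1 := ⟨n - 1, by omega⟩
    rw [Nat.add_sub_cancel]
    linarith
  let v₀ : Fin n := ⟨0, by omega⟩
  exact (graphical_hub v₀ (by simp; omega)).of_isMajorizedBy
    (isMajorizedBy_hub v₀ hlow (by rwa [Fintype.card_fin]))
end

section
/- Let D_1, …, D_k be tree degree sequences on a common set of n vertices without common leaves. Then for every vertex v, the sum of its degrees satisfies ∑_{i=1}^{k} d_v^{(i)} ≤ n − 1. -/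
/-- For tree degree sequences without common leaves, the total degree of each vertex
is at most `n - 1`. -/
theorem total_degree_le_n_sub_one {k n : ℕ} (D : Fin k → Fin n → ℕ)
    (hD : ∀ i, TreeDegSeq (D i)) (hleaves : NoCommonLeaves D) (v : Fin n) :
    ∑ i, D i v ≤ n - 1 := by
  rcases Nat.eq_zero_or_pos k with hk | hk
  · subst hk
    simp
  -- per-vertex lower bound: 2*k ≤ (∑ i, D i u) + 1
  have hu : ∀ u : Fin n, 2 * k ≤ (∑ i, D i u) + 1 := by
    intro u
    by_cases h : ∀ i, 2 ≤ D i u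
    · have : ∑ i : Fin k, 2 ≤ ∑ i, D i u := Finset.sum_le_sum fun i _ => h i
      simp at this
      omega
    · push_neg at h
      obtain ⟨i0, hi0⟩ := h
      have hi01 : D i0 u = 1 := by have := (hD i0).1 u; omega
      have hrest : ∀ j ∈ Finset.univ.erase i0, 2 ≤ D j u := by
        intro j hj
        exact hleaves u i0 j (Ne.symm (Finset.ne_of_mem_erase hj)) hi01
      have hcard : (Finset.univ.erase i0).card = k - 1 := by
        rw [Finset.card_erase_of_mem (Finset.mem_univ i0)]
        simp
      have hsum2 : (k - 1) * 2 ≤ ∑ j ∈ Finset.univ.erase i0, D j u := by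
        calc (k - 1) * 2 = ∑ _j ∈ Finset.univ.erase i0, 2 := by
              rw [Finset.sum_const, hcard, smul_eq_mul]
          _ ≤ _ := Finset.sum_le_sum hrest
      have hsplit : ∑ i, D i u = D i0 u + ∑ j ∈ Finset.univ.erase i0, D j u :=
        (Finset.add_sum_erase Finset.univ (fun i => D i u) (Finset.mem_univ i0)).symm
      omega
  -- total over all i and u
  have hA : (∑ u, ∑ i, D i u) + 2 * k = 2 * k * n := by
    have h1 : ∑ i : Fin k, ((∑ u, D i u) + 2) = ∑ i : Fin k, 2 * n :=
      Finset.sum_congr rfl fun i _ => (hD i).2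
    simp only [Finset.sum_add_distrib, Finset.sum_const, Finset.card_univ,
      Fintype.card_fin, smul_eq_mul] at h1
    rw [Finset.sum_comm]
    rw [show 2 * k * n = k * (2 * n) from by ring, show 2 * k = k * 2 from by ring]
    exact h1
  have hn : 0 < n := v.pos
  obtain ⟨m, rfl⟩ : ∃ m, n = m + 1 := ⟨n - 1, by omega⟩
  have hsplitv : ∑ u, ∑ i, D i u = (∑ i, D i v) + ∑ u ∈ Finset.univ.erase v, ∑ i, D i u :=
    (Finset.add_sum_erase Finset.univ (fun u => ∑ i, D i u) (Finset.mem_univ v)).symm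
  have hcardv : (Finset.univ.erase v).card = m := by
    rw [Finset.card_erase_of_mem (Finset.mem_univ v)]
    simp
  have hB : m * (2 * k) ≤ (∑ u ∈ Finset.univ.erase v, ∑ i, D i u) + m := by
    calc m * (2 * k) = ∑ _u ∈ Finset.univ.erase v, 2 * k := by
          rw [Finset.sum_const, hcardv, smul_eq_mul]
      _ ≤ ∑ u ∈ Finset.univ.erase v, ((∑ i, D i u) + 1) := Finset.sum_le_sum fun u _ => hu u
      _ = _ := by rw [Finset.sum_add_distrib, Finset.sum_const, hcardv, smul_eq_mul, mul_one]
  have hmk : 2 * k * (m + 1) = m * (2 * k) + 2 * k := by ring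
  rw [hmk] at hA
  generalize ht : m * (2 * k) = t at hA hB
  omega
end

section
/- Let D_1, …, D_k be tree degree sequences on a common vertex set without common leaves, such that not all of them are path degree sequences. Then there exist vertices v and w and an index i such that d_v^{(i)} = 1, d_v^{(j)} = 2 for all j ≠ i, and d_w^{(i)} > 2. -/
/-- `d` is a path degree sequence: exactly two degrees are `1` and all others are `2`. -/
def PathDegSeq {n : ℕ} (d : Fin n → ℕ) : Prop :=
  (Finset.univ.filter (fun v => d v = 1)).card = 2 ∧ ∀ v, d v = 1 ∨ d v = 2

open Finset in
lemma tree_card_aux {n : ℕ} (d : Fin n → ℕ) (hd : TreeDegSeq d) :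
    ((univ.filter (fun v => 2 < d v)).card + 2 ≤ (univ.filter (fun v => d v = 1)).card) ∧
    ((univ.filter (fun v => 2 < d v)) = ∅ → PathDegSeq d) := by
  have hpt : ∀ v : Fin n, d v + (if d v = 1 then 1 else 0)
      = 2 + (if 2 < d v then d v - 2 else 0) := by
    intro v
    have := hd.1 v
    by_cases h1 : d v = 1 <;> by_cases h2 : 2 < d v <;> simp [h1, h2] <;> omega
  have hsum : ∑ v, (d v + (if d v = 1 then 1 else 0))
      = ∑ v, (2 + (if 2 < d v then d v - 2 else 0)) :=
    Finset.sum_congr rfl (fun v _ => hpt v)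
  rw [Finset.sum_add_distrib, Finset.sum_add_distrib] at hsum
  have hL : ∑ v, (if d v = 1 then 1 else 0) = (univ.filter (fun v => d v = 1)).card :=
    (Finset.card_filter _ _).symm
  have hB : ∑ v, (if 2 < d v then d v - 2 else 0)
      = ∑ v ∈ univ.filter (fun v => 2 < d v), (d v - 2) :=
    (Finset.sum_filter _ _).symm
  have h2n : ∑ v : Fin n, (2 : ℕ) = 2 * n := by
    simp [Finset.sum_const, Finset.card_univ, mul_comm]
  have key : (univ.filter (fun v => d v = 1)).card
      = 2 + ∑ v ∈ univ.filter (fun v => 2 < d v), (d v - 2) := by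
    have hd2 := hd.2
    omega
  have hBge : (univ.filter (fun v => 2 < d v)).card
      ≤ ∑ v ∈ univ.filter (fun v => 2 < d v), (d v - 2) := by
    calc (univ.filter (fun v => 2 < d v)).card
        = ∑ _v ∈ univ.filter (fun v => 2 < d v), 1 := by simp
      _ ≤ ∑ v ∈ univ.filter (fun v => 2 < d v), (d v - 2) :=
          Finset.sum_le_sum (fun v hv => by
            simp only [Finset.mem_filter] at hv; omega)
  constructor
  · omega
  · intro hBempty
    constructor
    · rw [key, hBempty]; simp
    · intro v
      have h1 := hd.1 v
      have : v ∉ univ.filter (fun v => 2 < d v) := by rw [hBempty]; simp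
      simp only [Finset.mem_filter, Finset.mem_univ, true_and, not_lt] at this
      omega

/-- If tree degree sequences without common leaves are not all path degree sequences, then
there are vertices `v`, `w` and an index `i` with `d_v^(i) = 1`, `d_v^(j) = 2` for `j ≠ i`,
and `d_w^(i) > 2`. -/
theorem exists_reduction_vertex {k n : ℕ} (D : Fin k → Fin n → ℕ)
    (hD : ∀ i, TreeDegSeq (D i)) (hleaves : NoCommonLeaves D)
    (hnotpaths : ¬ ∀ i, PathDegSeq (D i)) :
    ∃ (v w : Fin n) (i : Fin k),
      D i v = 1 ∧ (∀ j, j ≠ i → D j v = 2) ∧ 2 < D i w := by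
  classical
  by_contra hcon
  push_neg at hcon
  obtain ⟨i₀, hi₀⟩ := not_forall.mp hnotpaths
  set L : Fin k → Finset (Fin n) := fun i => Finset.univ.filter (fun v => D i v = 1) with hLdef
  set B : Fin k → Finset (Fin n) := fun i => Finset.univ.filter (fun v => 2 < D i v) with hBdef
  have hkey : ∀ i, (B i).card + 2 ≤ (L i).card := fun i => (tree_card_aux _ (hD i)).1
  have hBne : (B i₀).Nonempty := by
    rcases Finset.eq_empty_or_nonempty (B i₀) with h | h
    · exact absurd ((tree_card_aux _ (hD i₀)).2 h) hi₀
    · exact h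
  set S : Finset (Fin k) := Finset.univ.filter (fun i => (B i).Nonempty) with hSdef
  have hi₀S : i₀ ∈ S := by simp [hSdef, hBne]
  have hsub : ∀ i ∈ S, L i ⊆ S.biUnion B := by
    intro i hiS v hv
    simp only [hLdef, Finset.mem_filter, Finset.mem_univ, true_and] at hv
    obtain ⟨w, hw⟩ : (B i).Nonempty := (Finset.mem_filter.mp hiS).2
    simp only [hBdef, Finset.mem_filter, Finset.mem_univ, true_and] at hw
    have hnall : ¬ ∀ j, j ≠ i → D j v = 2 := by
      intro hall
      have := hcon v w i hv hall
      omega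
    push_neg at hnall
    obtain ⟨j, hji, hj2⟩ := hnall
    have hge : 2 ≤ D j v := hleaves v i j (Ne.symm hji) hv
    have hgt : 2 < D j v := by omega
    refine Finset.mem_biUnion.mpr ⟨j, ?_, ?_⟩
    · simp only [hSdef, Finset.mem_filter, Finset.mem_univ, true_and]
      exact ⟨v, by simp [hBdef, hgt]⟩
    · simp [hBdef, hgt]
  have hdisj : ∀ i ∈ S, ∀ j ∈ S, i ≠ j → Disjoint (L i) (L j) := by
    intro i _ j _ hij
    apply Finset.disjoint_left.mpr
    intro v hvi hvj
    simp only [hLdef, Finset.mem_filter, Finset.mem_univ, true_and] at hvi hvj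
    have := hleaves v i j hij hvi
    omega
  have h1 : ∑ i ∈ S, (L i).card ≤ (S.biUnion B).card := by
    rw [← Finset.card_biUnion hdisj]
    exact Finset.card_le_card (Finset.biUnion_subset.mpr hsub)
  have h2 : (S.biUnion B).card ≤ ∑ i ∈ S, (B i).card := Finset.card_biUnion_le
  have h3 : ∑ i ∈ S, ((B i).card + 2) ≤ ∑ i ∈ S, (L i).card :=
    Finset.sum_le_sum (fun i _ => hkey i)
  rw [Finset.sum_add_distrib] at h3
  have h4 : ∑ _i ∈ S, (2 : ℕ) = 2 * S.card := by
    simp [Finset.sum_const, mul_comm]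
  have h5 : S.card ≠ 0 := Finset.card_ne_zero_of_mem hi₀S
  omega
end

section
/- Let T_1, T_2, T_3, T_4 be four pairwise edge-disjoint trees on the same vertex set V with |V| ≥ 10, such that no vertex is a leaf in more than one of the four trees (if a vertex has degree 1 in T_i, it has degree at least 2 in each T_j with j ≠ i). Let v_j ∈ V be an arbitrary vertex. Then there exist three pairwise vertex-disjoint edges e_1 ∈ T_1, e_2 ∈ T_2, e_3 ∈ T_3, none of which is incident to v_j. -/
/-!
Each tree has at least two leaves and no vertex is a leaf of two trees, so each tree has at most
`|V| - 6` leaves. Counting degrees outside a vertex cover `X` of a tree gives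
`|V| + 1 ≤ 2|X| + #leaves`; hence no tree has a vertex cover of size at most three. By König's
theorem for forests, `T i - v` either has a matching of size four or a vertex cover of size at
most three, and the latter cannot happen for all of `T 0, T 1, T 2` since `|V| ≥ 10`. So one of
them has a matching `M` of four edges avoiding `v`.

Take `z` outside `v` and the eight vertices of `M`. Since `z` is not a leaf hanging at `v` in both
remaining trees, one of them has an edge `zy` with `y ≠ v`, and the other has an edge `st` avoiding
`v, z, y`. The vertices `y, s, t` meet at most three edges of `M`, and the fourth completes the
rainbow matching.
-/

open Finset

namespace SimpleGraph

variable {V : Type*} {G : SimpleGraph V}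

/-- A matching of `G`, given by its finite set of edges rather than as a `Subgraph`. -/
def IsEdgeMatching (G : SimpleGraph V) (M : Finset (Sym2 V)) : Prop :=
  (M : Set (Sym2 V)) ⊆ G.edgeSet ∧ (M : Set (Sym2 V)).Pairwise fun e f ↦ ∀ v ∈ e, v ∉ f

lemma IsEdgeMatching.insert [DecidableEq V] {M : Finset (Sym2 V)} {e : Sym2 V}
    (hM : G.IsEdgeMatching M) (he : e ∈ G.edgeSet) (hdisj : ∀ f ∈ M, ∀ v ∈ e, v ∉ f) :
    G.IsEdgeMatching (insert e M) := by
  refine ⟨by simpa [Set.insert_subset_iff] using ⟨he, hM.1⟩, ?_⟩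
  rw [coe_insert, Set.pairwise_insert]
  exact ⟨hM.2, fun f hf _ ↦ ⟨hdisj f hf, fun v hvf hve ↦ hdisj f hf v hve hvf⟩⟩

lemma IsEdgeMatching.of_deleteIncidenceSet {M : Finset (Sym2 V)} {w : V}
    (hM : (G.deleteIncidenceSet w).IsEdgeMatching M) :
    G.IsEdgeMatching M ∧ ∀ e ∈ M, w ∉ e := by
  refine ⟨⟨hM.1.trans (edgeSet_mono (G.deleteIncidenceSet_le w)), hM.2⟩,
    fun e he hwe ↦ ?_⟩
  have := hM.1 he
  rw [edgeSet_deleteIncidenceSet] at this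
  exact this.2 ⟨this.1, hwe⟩

lemma IsVertexCover.insert_of_deleteIncidenceSet {c : Set V} {w : V}
    (hc : (G.deleteIncidenceSet w).IsVertexCover c) : G.IsVertexCover (insert w c) := by
  intro x y hxy
  by_cases hx : x = w
  · exact .inl (.inl hx)
  by_cases hy : y = w
  · exact .inr (.inl hy)
  exact (hc (deleteIncidenceSet_adj.2 ⟨hxy, hx, hy⟩)).imp (.inr) (.inr)

lemma IsEdgeMatching.exists_forall_notMem_of_card_lt {M : Finset (Sym2 V)}
    (hM : G.IsEdgeMatching M) {S : Finset V} (hS : #S < #M) :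
    ∃ e ∈ M, ∀ v ∈ S, v ∉ e := by
  by_contra! h
  refine hS.not_ge (card_le_card_of_forall_subsingleton (fun e v ↦ v ∈ e) h ?_)
  rintro v - e ⟨he, hve⟩ f ⟨hf, hvf⟩
  by_contra hef
  exact hM.2 he hf hef v hve hvf

lemma exists_ne_forall_notMem_of_two_mul_card_lt [Fintype V] (M : Finset (Sym2 V)) (v : V)
    (hM : 2 * #M + 1 < Fintype.card V) : ∃ z ≠ v, ∀ e ∈ M, z ∉ e := by
  classical
  have hM2 : #(M.biUnion Sym2.toFinset) ≤ #M * 2 :=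
    card_biUnion_le_card_mul M _ 2 fun e _ ↦ by rw [Sym2.card_toFinset]; split <;> omega
  have hcard : #(insert v (M.biUnion Sym2.toFinset)) < #(univ : Finset V) := by
    have := card_insert_le v (M.biUnion Sym2.toFinset)
    rw [card_univ]
    omega
  obtain ⟨z, -, hz⟩ := exists_mem_notMem_of_card_lt_card hcard
  simp only [mem_insert, mem_biUnion, Sym2.mem_toFinset, not_or, not_exists, not_and] at hz
  exact ⟨z, hz.1, hz.2⟩

lemma IsAcyclic.exists_adj_forall_adj_eq [Finite V] (hG : G.IsAcyclic) {x y : V}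
    (hxy : G.Adj x y) : ∃ a w, G.Adj a w ∧ ∀ c, G.Adj a c → c = w := by
  have : Nonempty V := ⟨x⟩
  obtain ⟨u, v, p, hp, hmax⟩ := Walk.exists_isPath_forall_isPath_length_le_length G
  have hnil : ¬p.Nil := by
    have := hmax x y _ (Path.singleton hxy).2
    rw [← Walk.length_eq_zero_iff]
    simp at this
    omega
  refine ⟨u, p.snd, p.adj_snd hnil, fun c hc ↦ hG.eq_snd_of_adj_start hp hc ?_⟩
  by_contra hcp
  have := hmax c v _ (hp.cons hcp (h := hc.symm))
  simp at this

/-- König's theorem for forests: a pendant edge `aw` goes into the matching and `w` into the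
cover. -/
lemma IsAcyclic.exists_isEdgeMatching_or_isVertexCover [Finite V] (hG : G.IsAcyclic) (k : ℕ) :
    (∃ M, G.IsEdgeMatching M ∧ #M = k) ∨ ∃ C : Finset V, #C < k ∧ G.IsVertexCover C := by
  classical
  induction k generalizing G with
  | zero => exact .inl ⟨∅, ⟨by simp, by simp⟩, rfl⟩
  | succ k ih =>
    by_cases hE : ∃ x y, G.Adj x y
    swap
    · exact .inr ⟨∅, by simp, fun x y hxy ↦ (hE ⟨x, y, hxy⟩).elim⟩
    obtain ⟨x, y, hxy⟩ := hE
    obtain ⟨a, w, haw, ha⟩ := hG.exists_adj_forall_adj_eq hxy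
    rcases ih (hG.anti (G.deleteIncidenceSet_le w)) with ⟨M, hM, hMk⟩ | ⟨C, hCk, hC⟩
    · obtain ⟨hM', hwM⟩ := hM.of_deleteIncidenceSet
      have haM : ∀ f ∈ M, a ∉ f := by
        intro f hf haf
        have hf' := hM'.1 hf
        rw [← Sym2.other_spec haf, mem_edgeSet] at hf'
        exact hwM _ hf (ha _ hf' ▸ Sym2.other_mem haf)
      refine .inl ⟨insert s(a, w) M, hM'.insert haw ?_, ?_⟩
      · simp only [Sym2.mem_iff, forall_eq_or_imp, forall_eq]
        exact fun f hf ↦ ⟨haM f hf, hwM f hf⟩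
      · rw [card_insert_of_notMem fun h ↦ hwM _ h (Sym2.mem_mk_right a w), hMk]
    · refine .inr ⟨insert w C, (card_insert_le _ _).trans_lt (by omega), ?_⟩
      simpa using hC.insert_of_deleteIncidenceSet

section

variable [Fintype V] [DecidableRel G.Adj]

lemma ncard_neighborSet_eq_degree (v : V) : (G.neighborSet v).ncard = G.degree v := by
  rw [Set.ncard_eq_toFinset_card', ← card_neighborFinset_eq_degree, neighborFinset]

lemma IsVertexCover.sum_degree_compl_le [DecidableEq V] {X : Finset V}
    (hX : G.IsVertexCover X) : ∑ v ∈ Xᶜ, G.degree v ≤ #G.edgeFinset := by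
  have hdisj : ((Xᶜ : Finset V) : Set V).PairwiseDisjoint (G.incidenceFinset ·) := by
    intro u hu v hv huv
    rw [Function.onFun, ← disjoint_coe, coe_incidenceFinset, coe_incidenceFinset,
      Set.disjoint_iff_inter_eq_empty]
    refine G.incidenceSet_inter_incidenceSet_of_not_adj (fun h ↦ ?_) huv
    simp only [coe_compl, Set.mem_compl_iff, mem_coe] at hu hv
    exact (hX h).elim hu hv
  calc ∑ v ∈ Xᶜ, G.degree v = #(Xᶜ.biUnion (G.incidenceFinset ·)) := by
        simp only [card_biUnion hdisj, card_incidenceFinset_eq_degree]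
    _ ≤ #G.edgeFinset := card_le_card (biUnion_subset.2 fun v _ ↦ G.incidenceFinset_subset v)

lemma two_mul_card_le_sum_degree_add_card_filter (hpos : ∀ v, 0 < G.degree v) (s : Finset V) :
    2 * #s ≤ ∑ v ∈ s, G.degree v + #{v ∈ s | G.degree v = 1} := by
  rw [card_filter, ← sum_add_distrib, card_eq_sum_ones, mul_sum]
  gcongr with v
  have := hpos v
  split <;> omega

variable [Nontrivial V]

lemma IsTree.card_add_one_le_of_isVertexCover (hG : G.IsTree) {X : Finset V}
    (hX : G.IsVertexCover X) : Fintype.card V + 1 ≤ 2 * #X + #{v | G.degree v = 1} := by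
  classical
  have hpos : ∀ v, 0 < G.degree v := fun v ↦
    hG.connected.preconnected.degree_pos_of_nontrivial v
  have hcount := two_mul_card_le_sum_degree_add_card_filter hpos Xᶜ
  have hleaves : #{v ∈ Xᶜ | G.degree v = 1} ≤ #{v | G.degree v = 1} :=
    card_le_card (filter_subset_filter _ (subset_univ _))
  have := hX.sum_degree_compl_le
  have := hG.card_edgeFinset
  have := card_compl X
  have := card_le_univ X
  omega

lemma IsTree.two_le_card_leaves (hG : G.IsTree) : 2 ≤ #{v | G.degree v = 1} := by
  obtain ⟨u, v, huv, hu, hv⟩ := hG.exists_ne_and_degree_eq_one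
  exact one_lt_card.2 ⟨u, by simpa, v, by simpa, huv⟩

lemma IsTree.exists_adj_ne_of_degree_ne_one (hG : G.IsTree) {z : V} (hz : G.degree z ≠ 1)
    (v : V) : ∃ y ≠ v, G.Adj z y := by
  by_contra! h
  have hsub : G.neighborFinset z ⊆ {v} := fun y hy ↦
    mem_singleton.2 (by_contra fun hyv ↦ h y hyv ((mem_neighborFinset _ _ _).1 hy))
  have := card_le_card hsub
  rw [card_neighborFinset_eq_degree, card_singleton] at this
  have := hG.connected.preconnected.degree_pos_of_nontrivial z
  omega

lemma IsTree.exists_adj_ne_or_exists_adj_ne {H : SimpleGraph V} [DecidableRel H.Adj]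
    (hG : G.IsTree) (hH : H.IsTree) {z : V} (hz : G.degree z = 1 → H.degree z ≠ 1) (v : V) :
    (∃ y ≠ v, G.Adj z y) ∨ ∃ y ≠ v, H.Adj z y := by
  by_cases hGz : G.degree z = 1
  · exact .inr (hH.exists_adj_ne_of_degree_ne_one (hz hGz) v)
  · exact .inl (hG.exists_adj_ne_of_degree_ne_one hGz v)

lemma IsTree.exists_isEdgeMatching_forall_notMem_or (hG : G.IsTree) (v : V) (k : ℕ) :
    (∃ M, G.IsEdgeMatching M ∧ #M = k ∧ ∀ e ∈ M, v ∉ e) ∨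
      Fintype.card V + 1 ≤ 2 * k + #{u | G.degree u = 1} := by
  classical
  have hG' := hG.isAcyclic.anti (G.deleteIncidenceSet_le v)
  rcases hG'.exists_isEdgeMatching_or_isVertexCover k with ⟨M, hM, hMk⟩ | ⟨C, hCk, hC⟩
  · exact .inl ⟨M, hM.of_deleteIncidenceSet.1, hMk, hM.of_deleteIncidenceSet.2⟩
  · have := hG.card_add_one_le_of_isVertexCover (X := insert v C) (by
      simpa using hC.insert_of_deleteIncidenceSet)
    have := card_insert_le v C
    exact .inr (by omega)

end

def HasRainbowMatchingAvoiding (v : V) (G₁ G₂ G₃ : SimpleGraph V) : Prop :=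
  ∃ a₁ b₁ a₂ b₂ a₃ b₃ : V, G₁.Adj a₁ b₁ ∧ G₂.Adj a₂ b₂ ∧ G₃.Adj a₃ b₃ ∧
    [v, a₁, b₁, a₂, b₂, a₃, b₃].Nodup

namespace HasRainbowMatchingAvoiding

variable {v : V} {A B C : SimpleGraph V}

lemma swap₁₂ (h : HasRainbowMatchingAvoiding v A B C) : HasRainbowMatchingAvoiding v B A C := by
  obtain ⟨a₁, b₁, a₂, b₂, a₃, b₃, h₁, h₂, h₃, hnd⟩ := h
  refine ⟨a₂, b₂, a₁, b₁, a₃, b₃, h₂, h₁, h₃, ?_⟩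
  simp only [List.nodup_cons, List.mem_cons, List.not_mem_nil, List.nodup_nil] at hnd ⊢
  grind

lemma swap₂₃ (h : HasRainbowMatchingAvoiding v A B C) : HasRainbowMatchingAvoiding v A C B := by
  obtain ⟨a₁, b₁, a₂, b₂, a₃, b₃, h₁, h₂, h₃, hnd⟩ := h
  refine ⟨a₁, b₁, a₃, b₃, a₂, b₂, h₁, h₃, h₂, ?_⟩
  simp only [List.nodup_cons, List.mem_cons, List.not_mem_nil, List.nodup_nil] at hnd ⊢
  grind

lemma of_isEdgeMatching_of_adj {M : Finset (Sym2 V)} {x y : V} (hM : A.IsEdgeMatching M)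
    (hM4 : #M = 4) (hvM : ∀ e ∈ M, v ∉ e) (hxy : B.Adj x y) (hxv : x ≠ v) (hyv : y ≠ v)
    (hxM : ∀ e ∈ M, x ∉ e) (hC : ∀ X : Finset V, #X ≤ 3 → ¬C.IsVertexCover X) :
    HasRainbowMatchingAvoiding v A B C := by
  classical
  obtain ⟨s, t, hst, hs, ht⟩ : ∃ s t, C.Adj s t ∧ s ∉ ({v, x, y} : Finset V) ∧
      t ∉ ({v, x, y} : Finset V) := by
    simpa [IsVertexCover] using hC {v, x, y} card_le_three
  obtain ⟨e, heM, he⟩ := hM.exists_forall_notMem_of_card_lt (S := {y, s, t})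
    (card_le_three.trans_lt (by omega))
  induction e using Sym2.ind with | _ a b => ?_
  have hab : A.Adj a b := hM.1 heM
  refine ⟨a, b, x, y, s, t, hab, hxy, hst, ?_⟩
  have hvab := hvM _ heM
  have hxab := hxM _ heM
  have := hab.ne
  have := hxy.ne
  have := hst.ne
  simp only [List.nodup_cons, List.mem_cons, List.not_mem_nil, List.nodup_nil, mem_insert,
    mem_singleton, Sym2.mem_iff] at hs ht he hvab hxab ⊢
  grind

lemma of_isEdgeMatching [Fintype V] {M : Finset (Sym2 V)} (hV : 10 ≤ Fintype.card V)
    (hM : A.IsEdgeMatching M) (hM4 : #M = 4) (hvM : ∀ e ∈ M, v ∉ e)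
    (hB : ∀ X : Finset V, #X ≤ 3 → ¬B.IsVertexCover X)
    (hC : ∀ X : Finset V, #X ≤ 3 → ¬C.IsVertexCover X)
    (hBC : ∀ z, (∃ y ≠ v, B.Adj z y) ∨ ∃ y ≠ v, C.Adj z y) :
    HasRainbowMatchingAvoiding v A B C := by
  obtain ⟨z, hzv, hzM⟩ := exists_ne_forall_notMem_of_two_mul_card_lt M v (by omega)
  rcases hBC z with ⟨y, hyv, hzy⟩ | ⟨y, hyv, hzy⟩
  · exact of_isEdgeMatching_of_adj hM hM4 hvM hzy hzv hyv hzM hC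
  · exact (of_isEdgeMatching_of_adj hM hM4 hvM hzy hzv hyv hzM hB).swap₂₃

end HasRainbowMatchingAvoiding

lemma sum_card_filter_degree_eq_one_le {ι : Type*} [Fintype V] (G : ι → SimpleGraph V)
    [∀ i, DecidableRel (G i).Adj] (s : Finset ι)
    (h : ∀ v i j, i ≠ j → (G i).degree v = 1 → (G j).degree v ≠ 1) :
    ∑ i ∈ s, #{v | (G i).degree v = 1} ≤ Fintype.card V := by
  classical
  rw [← card_biUnion fun i _ j _ hij ↦ disjoint_filter.2 fun v _ ↦ h v i j hij]
  exact card_le_univ _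

end SimpleGraph

open SimpleGraph

theorem rainbow_matching_of_four_trees_general {V : Type*} [Fintype V]
    (T : Fin 4 → SimpleGraph V) (htree : ∀ i, (T i).IsTree)
    (hleaves : ∀ (v : V) (i j : Fin 4), i ≠ j →
      ((T i).neighborSet v).ncard = 1 → 2 ≤ ((T j).neighborSet v).ncard)
    (hcard : 10 ≤ Fintype.card V) (vj : V) :
    ∃ a₁ b₁ a₂ b₂ a₃ b₃ : V,
      (T 0).Adj a₁ b₁ ∧ (T 1).Adj a₂ b₂ ∧ (T 2).Adj a₃ b₃ ∧
      ([vj, a₁, b₁, a₂, b₂, a₃, b₃] : List V).Nodup := by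
  classical
  have : Nontrivial V := Fintype.one_lt_card_iff_nontrivial.1 (by omega)
  have hleaf : ∀ v i j, i ≠ j → (T i).degree v = 1 → (T j).degree v ≠ 1 := by
    intro v i j hij h
    have := hleaves v i j hij
    simp only [ncard_neighborSet_eq_degree] at this
    omega
  have hℓ := sum_card_filter_degree_eq_one_le T univ hleaf
  rw [Fin.sum_univ_four] at hℓ
  have hℓ₀ := (htree 0).two_le_card_leaves
  have hℓ₁ := (htree 1).two_le_card_leaves
  have hℓ₂ := (htree 2).two_le_card_leaves
  have hℓ₃ := (htree 3).two_le_card_leaves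
  have hcover : ∀ i (X : Finset V), #X ≤ 3 → ¬(T i).IsVertexCover X := fun i X hX hcov ↦ by
    have := (htree i).card_add_one_le_of_isVertexCover hcov
    fin_cases i <;> dsimp at this <;> omega
  have hBC : ∀ i j, i ≠ j → ∀ z, (∃ y ≠ vj, (T i).Adj z y) ∨ ∃ y ≠ vj, (T j).Adj z y :=
    fun i j hij z ↦ (htree i).exists_adj_ne_or_exists_adj_ne (htree j) (hleaf z i j hij) vj
  open HasRainbowMatchingAvoiding in
  obtain ⟨M, hM, hM4, hvM⟩ | h₀ := (htree 0).exists_isEdgeMatching_forall_notMem_or vj 4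
  · exact of_isEdgeMatching hcard hM hM4 hvM (hcover 1) (hcover 2) (hBC 1 2 (by decide))
  obtain ⟨M, hM, hM4, hvM⟩ | h₁ := (htree 1).exists_isEdgeMatching_forall_notMem_or vj 4
  · exact (of_isEdgeMatching hcard hM hM4 hvM (hcover 0) (hcover 2)
      (hBC 0 2 (by decide))).swap₁₂
  obtain ⟨M, hM, hM4, hvM⟩ | h₂ := (htree 2).exists_isEdgeMatching_forall_notMem_or vj 4
  · exact (of_isEdgeMatching hcard hM hM4 hvM (hcover 0) (hcover 1)
      (hBC 0 1 (by decide))).swap₁₂.swap₂₃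
  omega

/-- Given four pairwise edge-disjoint trees on a vertex set of size at least 10 with no
common leaves, and an arbitrary vertex `vj`, there are three pairwise vertex-disjoint edges,
one from each of the first three trees, none incident to `vj` (a rainbow matching of
size 3 in the first three colors avoiding `vj`). -/
theorem rainbow_matching_of_four_trees {V : Type*} [Fintype V]
    (T : Fin 4 → SimpleGraph V) (htree : ∀ i, (T i).IsTree)
    (hdisj : ∀ i j, i ≠ j → Disjoint (T i).edgeSet (T j).edgeSet)
    (hleaves : ∀ (v : V) (i j : Fin 4), i ≠ j →
      ((T i).neighborSet v).ncard = 1 → 2 ≤ ((T j).neighborSet v).ncard)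
    (hcard : 10 ≤ Fintype.card V) (vj : V) :
    ∃ a₁ b₁ a₂ b₂ a₃ b₃ : V,
      (T 0).Adj a₁ b₁ ∧ (T 1).Adj a₂ b₂ ∧ (T 2).Adj a₃ b₃ ∧
      ([vj, a₁, b₁, a₂, b₂, a₃, b₃] : List V).Nodup :=
  rainbow_matching_of_four_trees_general T htree hleaves hcard vj
end

section
/- Let D_1, …, D_k be path degree sequences on a common set of n vertices without common leaves. Then they have edge-disjoint realizations: there exist pairwise edge-disjoint simple graphs G_1, …, G_k on the vertex set such that each G_i is a path realizing D_i. -/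
open Function

theorem Function.Embedding.exists_equiv_apply_eq {α β γ : Type*} [Fintype α] [Fintype β]
    [Fintype γ] (e : α ↪ β) (f : α ↪ γ) (h : Fintype.card β = Fintype.card γ) :
    ∃ g : β ≃ γ, ∀ a, g (e a) = f a := by
  classical
  have hcompl : Fintype.card ↥(Set.range e)ᶜ = Fintype.card ↥(Set.range f)ᶜ := by
    rw [Fintype.card_compl_set, Fintype.card_compl_set, Set.card_range_of_injective e.injective,
      Set.card_range_of_injective f.injective, h]
  refine ⟨(Equiv.Set.sumCompl _).symm.trans
    (((e.toEquivRange.symm.trans f.toEquivRange).sumCongr (Fintype.equivOfCardEq hcompl)).trans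
      (Equiv.Set.sumCompl _)), fun a => ?_⟩
  simp [Equiv.Set.sumCompl_symm_apply_of_mem]

theorem ZMod.intCast_eq_intCast_iff_of_abs_sub_lt {n : ℕ} {x y : ℤ} (h : |x - y| < n) :
    (x : ZMod n) = y ↔ x = y := by
  refine ⟨fun hxy => ?_, congrArg _⟩
  rw [ZMod.intCast_eq_intCast_iff_dvd_sub] at hxy
  have := Int.eq_zero_of_abs_lt_dvd hxy (by rwa [abs_sub_comm])
  omega

namespace SimpleGraph

theorem pathGraph_isAcyclic (n : ℕ) : (pathGraph n).IsAcyclic := by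
  suffices h : ∀ u v : Fin n, u.val + 1 = v.val → (pathGraph n).IsBridge s(u, v) by
    refine isAcyclic_iff_forall_adj_isBridge.mpr fun u v huv => ?_
    rcases pathGraph_adj.mp huv with huv | huv
    · exact h u v huv
    · exact Sym2.eq_swap ▸ h v u huv
  rintro u v huv ⟨p⟩
  -- the only edge leaving `{w | w ≤ u}` is the deleted one
  obtain ⟨⟨⟨x, y⟩, hxy⟩, -, hx, hy⟩ :=
    p.exists_boundary_dart {w | w ≤ u} (by simp) (by simp; omega)
  simp only [deleteEdges_adj, pathGraph_adj, Set.mem_singleton_iff, Sym2.eq_iff,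
    Fin.ext_iff] at hxy
  simp only [Set.mem_ofPred_eq, Fin.le_def, not_le] at hx hy
  omega

theorem pathGraph_isTree (m : ℕ) : (pathGraph (m + 1)).IsTree :=
  ⟨pathGraph_connected m, pathGraph_isAcyclic _⟩

theorem ncard_neighborSet_pathGraph {m : ℕ} (hm : 1 ≤ m) (v : Fin (m + 1)) :
    ((pathGraph (m + 1)).neighborSet v).ncard = if v = 0 ∨ v = Fin.last m then 1 else 2 := by
  have hnbr (w : Fin (m + 1)) :
      w ∈ (pathGraph (m + 1)).neighborSet v ↔ v.val + 1 = w ∨ w.val + 1 = v := pathGraph_adj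
  simp only [Fin.ext_iff, Fin.val_zero, Fin.val_last]
  split_ifs with hv
  · rw [Set.ncard_eq_one]
    rcases hv with hv | hv
    · exact ⟨⟨1, by omega⟩, Set.ext fun w => by
        simp only [hnbr, Set.mem_singleton_iff, Fin.ext_iff]; omega⟩
    · exact ⟨⟨m - 1, by omega⟩, Set.ext fun w => by
        simp only [hnbr, Set.mem_singleton_iff, Fin.ext_iff]; omega⟩
  · refine Set.ncard_eq_two.mpr ⟨⟨v - 1, by omega⟩, ⟨v + 1, by omega⟩,
      by simp only [ne_eq, Fin.ext_iff]; omega, Set.ext fun w => ?_⟩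
    simp only [hnbr, Set.mem_insert_iff, Set.mem_singleton_iff, Fin.ext_iff]
    omega

def pathAlong {V : Type*} {m : ℕ} (σ : Fin (m + 1) ≃ V) : SimpleGraph V :=
  (pathGraph (m + 1)).map σ

theorem pathAlong_isTree {V : Type*} {m : ℕ} (σ : Fin (m + 1) ≃ V) : (pathAlong σ).IsTree :=
  (Iso.map σ _).isTree_iff.mp (pathGraph_isTree m)

theorem ncard_neighborSet_pathAlong {V : Type*} [DecidableEq V] {m : ℕ} (hm : 1 ≤ m)
    (σ : Fin (m + 1) ≃ V) (v : V) :
    ((pathAlong σ).neighborSet v).ncard = if v = σ 0 ∨ v = σ (Fin.last m) then 1 else 2 := by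
  rw [pathAlong, neighborSet_map_equiv,
    Set.ncard_preimage_of_injective_subset_range σ.symm.injective (by simp),
    ncard_neighborSet_pathGraph hm]
  simp only [σ.symm_apply_eq]

theorem pathAlong_trans {V W : Type*} {m : ℕ} (σ : Fin (m + 1) ≃ V) (τ : V ≃ W) :
    pathAlong (σ.trans τ) = (pathAlong σ).map τ := by
  rw [pathAlong, pathAlong, map_map, Equiv.coe_trans]

theorem disjoint_edgeSet_map {V W : Type*} {G H : SimpleGraph V} (f : V ↪ W)
    (h : Disjoint G.edgeSet H.edgeSet) :
    Disjoint (G.map f).edgeSet (H.map f).edgeSet := by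
  rw [edgeSet_map, edgeSet_map]
  exact (Set.disjoint_image_iff f.sym2Map.injective).mpr h

end SimpleGraph

open SimpleGraph

/-- `0, 1, -1, 2, -2, …` -/
def zigzag (j : ℕ) : ℤ := if j % 2 = 1 then (j + 1) / 2 else -(j / 2 : ℕ)

theorem zigzag_zero : zigzag 0 = 0 := rfl

theorem abs_zigzag_sub_zigzag_lt {n j j' : ℕ} (hj : j < n) (hj' : j' < n) :
    |zigzag j - zigzag j'| < n := by
  unfold zigzag
  rw [abs_sub_lt_iff]
  split_ifs <;> omega

theorem zigzag_add_zigzag_of_adj {i j : ℕ} (h : i + 1 = j ∨ j + 1 = i) :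
    zigzag i + zigzag j = 0 ∨ zigzag i + zigzag j = 1 := by
  unfold zigzag
  split_ifs <;> omega

theorem zigzag_injective : Injective zigzag := by
  intro j j' h
  unfold zigzag at h
  split_ifs at h <;> omega

noncomputable def zigzagEquiv (m : ℕ) : Fin (m + 1) ≃ ZMod (m + 1) :=
  Equiv.ofBijective (fun j => (zigzag j : ZMod (m + 1))) <|
    (Fintype.bijective_iff_injective_and_card _).mpr ⟨fun j j' h => Fin.ext <| zigzag_injective <|
      (ZMod.intCast_eq_intCast_iff_of_abs_sub_lt (abs_zigzag_sub_zigzag_lt j.2 j'.2)).mp h,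
      by simp [ZMod.card]⟩

/-- The labelling `a, a + 1, a - 1, a + 2, a - 2, …` of `ZMod (m + 1)`. -/
noncomputable def zigzagPath (m : ℕ) (a : ZMod (m + 1)) : Fin (m + 1) ≃ ZMod (m + 1) :=
  (zigzagEquiv m).trans (Equiv.addLeft a)

theorem zigzagPath_apply (m : ℕ) (a : ZMod (m + 1)) (j : Fin (m + 1)) :
    zigzagPath m a j = a + zigzag j := by
  simp [zigzagPath, zigzagEquiv]

theorem exists_add_eq_of_adj_zigzagPath {m : ℕ} {a u v : ZMod (m + 1)}
    (h : (pathAlong (zigzagPath m a)).Adj u v) :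
    ∃ ε : ℤ, (ε = 0 ∨ ε = 1) ∧ u + v = 2 * a + ε := by
  obtain ⟨-, x, y, hxy, rfl, rfl⟩ := h
  refine ⟨zigzag x + zigzag y, zigzag_add_zigzag_of_adj (pathGraph_adj.mp hxy), ?_⟩
  simp only [zigzagPath_apply]
  push_cast
  ring

theorem pairwise_disjoint_edgeSet_zigzagPath {m k : ℕ} (hk : 2 * k ≤ m + 1) :
    Pairwise (Disjoint on fun i : Fin k => (pathAlong (zigzagPath m (i : ℕ))).edgeSet) := by
  intro i j hij
  refine Set.disjoint_left.mpr fun e hi hj => ?_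
  induction e using Sym2.ind with | _ u v => ?_
  obtain ⟨ε, hε, hi⟩ := exists_add_eq_of_adj_zigzagPath hi
  obtain ⟨ε', hε', hj⟩ := exists_add_eq_of_adj_zigzagPath hj
  have : ((2 * i + ε : ℤ) : ZMod (m + 1)) = ((2 * j + ε' : ℤ)) := by
    push_cast
    rw [← hi, ← hj]
  rw [ZMod.intCast_eq_intCast_iff_of_abs_sub_lt (by rw [abs_sub_lt_iff]; omega)] at this
  exact hij (Fin.ext (by omega))

theorem injective_zigzagPath_ends {m k : ℕ} (hk : 2 * k ≤ m + 1) :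
    Injective (Sum.elim (fun i : Fin k => ((i : ℕ) : ZMod (m + 1)))
      (fun i : Fin k => (i : ℕ) + (zigzag m : ZMod (m + 1)))) := by
  have hz : m % 2 = 1 ∧ zigzag m = (m + 1) / 2 ∨ m % 2 = 0 ∧ zigzag m = -(m / 2 : ℕ) := by
    unfold zigzag
    split_ifs <;> omega
  let E : Fin k ⊕ Fin k → ℤ := Sum.elim (fun i => i) (fun i => i + zigzag m)
  have hE : ∀ x y, |E x - E y| < m + 1 := by
    rintro (x | x) (y | y) <;> simp only [E, Sum.elim_inl, Sum.elim_inr, abs_sub_lt_iff] <;> omega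
  intro x y h
  have : E x = E y := by
    refine (ZMod.intCast_eq_intCast_iff_of_abs_sub_lt (by exact_mod_cast hE x y)).mp ?_
    rcases x with x | x <;> rcases y with y | y <;> simpa [E] using h
  rcases x with x | x <;> rcases y with y | y <;>
    simp only [E, Sum.elim_inl, Sum.elim_inr] at this <;>
    simp only [Sum.inl.injEq, Sum.inr.injEq, reduceCtorEq, Fin.ext_iff] <;> omega

theorem exists_pairwise_disjoint_pathAlong {V : Type*} [Fintype V] {m k : ℕ}
    (hV : Fintype.card V = m + 1) (A B : Fin k → V) (hAB : Injective (Sum.elim A B)) :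
    ∃ σ : Fin k → (Fin (m + 1) ≃ V), (∀ i, σ i 0 = A i ∧ σ i (Fin.last m) = B i) ∧
      Pairwise (Disjoint on fun i => (pathAlong (σ i)).edgeSet) := by
  have hk : 2 * k ≤ m + 1 := by simpa [two_mul, hV] using Fintype.card_le_of_injective _ hAB
  obtain ⟨τ, hτ⟩ :=
    Embedding.exists_equiv_apply_eq ⟨_, injective_zigzagPath_ends hk⟩ ⟨_, hAB⟩ (by simp [hV])
  refine ⟨fun i => (zigzagPath m (i : ℕ)).trans τ, fun i => ⟨?_, ?_⟩, fun i j hij => ?_⟩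
  · simpa [zigzagPath_apply, zigzag_zero] using hτ (.inl i)
  · simpa [zigzagPath_apply] using hτ (.inr i)
  · simp only [pathAlong_trans]
    exact disjoint_edgeSet_map τ.toEmbedding (pairwise_disjoint_edgeSet_zigzagPath hk hij)

theorem PathDegSeq.exists_leaves {n : ℕ} {d : Fin n → ℕ} (h : PathDegSeq d) :
    ∃ a b, a ≠ b ∧ ∀ v, d v = if v = a ∨ v = b then 1 else 2 := by
  obtain ⟨a, b, hab, hleaves⟩ := Finset.card_eq_two.mp h.1
  refine ⟨a, b, hab, fun v => ?_⟩
  have hv : d v = 1 ↔ v = a ∨ v = b := by simpa using Finset.ext_iff.mp hleaves v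
  split_ifs <;> have := h.2 v <;> grind

theorem NoCommonLeaves.injective_sum_elim {k n : ℕ} {D : Fin k → Fin n → ℕ}
    (h : NoCommonLeaves D) {A B : Fin k → Fin n} (hA : ∀ i, D i (A i) = 1)
    (hB : ∀ i, D i (B i) = 1) (hAB : ∀ i, A i ≠ B i) :
    Injective (Sum.elim A B) := by
  have hleaf {i j : Fin k} {v : Fin n} (hi : D i v = 1) (hj : D j v = 1) : i = j := by
    by_contra hij
    have := h v i j hij hi
    omega
  rintro (i | i) (j | j) hv <;> simp only [Sum.elim_inl, Sum.elim_inr] at hv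
  · rw [hleaf (hA i) (hv ▸ hA j)]
  · obtain rfl := hleaf (hA i) (hv ▸ hB j); exact absurd hv (hAB i)
  · obtain rfl := hleaf (hB i) (hv ▸ hA j); exact absurd hv.symm (hAB i)
  · rw [hleaf (hB i) (hv ▸ hB j)]

/-- Path degree sequences without common leaves have edge-disjoint realizations: there are
pairwise edge-disjoint Hamiltonian paths (connected acyclic graphs with the prescribed
path degree sequences) realizing them. -/
theorem path_degree_sequences_edge_disjoint_realizations {k n : ℕ}
    (D : Fin k → Fin n → ℕ) (hD : ∀ i, PathDegSeq (D i)) (hleaves : NoCommonLeaves D) :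
    ∃ G : Fin k → SimpleGraph (Fin n),
      (∀ i, (G i).IsTree) ∧
      (∀ i j, i ≠ j → Disjoint (G i).edgeSet (G j).edgeSet) ∧
      (∀ i v, ((G i).neighborSet v).ncard = D i v) := by
  rcases isEmpty_or_nonempty (Fin k) with _ | ⟨⟨i₀⟩⟩
  · exact ⟨isEmptyElim, isEmptyElim, isEmptyElim, isEmptyElim⟩
  choose A B hAB hDAB using fun i => (hD i).exists_leaves
  obtain ⟨m, rfl, hm⟩ : ∃ m, n = m + 1 ∧ 1 ≤ m :=
    ⟨n - 1, by have := Fin.nontrivial_iff_two_le.mp ⟨_, _, hAB i₀⟩; omega⟩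
  have hinj := hleaves.injective_sum_elim (by simp [hDAB]) (by simp [hDAB]) hAB
  obtain ⟨σ, hσ, hdisj⟩ := exists_pairwise_disjoint_pathAlong (Fintype.card_fin _) A B hinj
  refine ⟨fun i => pathAlong (σ i), fun i => pathAlong_isTree _, fun i j hij => hdisj hij,
    fun i v => ?_⟩
  rw [ncard_neighborSet_pathAlong hm, (hσ i).1, (hσ i).2, hDAB]
end

section
/- Let G be a graph whose edges are colored with k colors c_1, …, c_k such that for each i = 1, …, k, the subgraph consisting of the edges of color c_i contains a matching of size 2i. Let v be an arbitrary vertex of G. Then G ∖ {v} contains a rainbow matching of size k, i.e., k pairwise vertex-disjoint edges of k distinct colors, none incident to v. -/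
/-- The graph `G` contains a matching of size `m`: there are `m` pairwise vertex-disjoint
edges. -/
def HasMatchingOfSize {V : Type*} (G : SimpleGraph V) (m : ℕ) : Prop :=
  ∃ p : Fin m → V × V,
    (∀ a, G.Adj (p a).1 (p a).2) ∧
    (∀ a b, a ≠ b →
      (p a).1 ≠ (p b).1 ∧ (p a).1 ≠ (p b).2 ∧ (p a).2 ≠ (p b).1 ∧ (p a).2 ≠ (p b).2)

/-!
Choose the edges greedily, colour by colour in increasing order. Before colour `i`
(zero-indexed) is treated, the forbidden vertex and the `i` edges already chosen cover at most
`2i + 1` vertices; each vertex lies on at most one edge of a matching, so one of the `2i + 2`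
edges of a matching of colour `i` avoids them all.
-/

section RainbowMatching

open Finset

variable {V : Type*}

def PairwiseVertexDisjoint {ι : Type*} (p : ι → V × V) : Prop :=
  ∀ i j, i ≠ j →
    (p i).1 ≠ (p j).1 ∧ (p i).1 ≠ (p j).2 ∧ (p i).2 ≠ (p j).1 ∧ (p i).2 ≠ (p j).2

theorem HasMatchingOfSize.exists_adj_notMem {G : SimpleGraph V} {m : ℕ}
    (hG : HasMatchingOfSize G m) (S : Finset V) (hS : #S < m) :
    ∃ x y, G.Adj x y ∧ x ∉ S ∧ y ∉ S := by
  classical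
  obtain ⟨p, hadj, hdisj⟩ := hG
  by_contra! hblocked
  have hhit : ∀ a, (p a).1 ∉ S → (p a).2 ∈ S := fun a => hblocked _ _ (hadj a)
  let hitVertex a := if (p a).1 ∈ S then (p a).1 else (p a).2
  have hmaps : ∀ a ∈ (univ : Finset (Fin m)), hitVertex a ∈ S := by
    intro a _
    by_cases h : (p a).1 ∈ S <;> simp [hitVertex, h, hhit]
  have hinj : Set.InjOn hitVertex (univ : Finset (Fin m)) := by
    intro a _ b _ hab
    by_contra hne
    have := hdisj a b hne
    simp only [hitVertex] at hab
    split_ifs at hab <;> tauto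
  have := card_le_card_of_injOn hitVertex hmaps hinj
  simp only [card_univ, Fintype.card_fin] at this
  omega

section Covered

variable [DecidableEq V] {n : ℕ}

def coveredVertices (p : Fin n → V × V) : Finset V :=
  univ.biUnion fun i => {(p i).1, (p i).2}

theorem card_coveredVertices_le (p : Fin n → V × V) : #(coveredVertices p) ≤ 2 * n := by
  calc #(coveredVertices p) ≤ #(univ : Finset (Fin n)) * 2 :=
        card_biUnion_le_card_mul _ _ _ fun _ _ => card_le_two
    _ = 2 * n := by rw [card_univ, Fintype.card_fin, mul_comm]

theorem fst_mem_coveredVertices (p : Fin n → V × V) (i : Fin n) :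
    (p i).1 ∈ coveredVertices p :=
  mem_biUnion.2 ⟨i, mem_univ i, mem_insert_self _ _⟩

theorem snd_mem_coveredVertices (p : Fin n → V × V) (i : Fin n) :
    (p i).2 ∈ coveredVertices p :=
  mem_biUnion.2 ⟨i, mem_univ i, mem_insert_of_mem (mem_singleton_self _)⟩

theorem PairwiseVertexDisjoint.snoc {p : Fin n → V × V} (hp : PairwiseVertexDisjoint p)
    {e : V × V} (he₁ : e.1 ∉ coveredVertices p) (he₂ : e.2 ∉ coveredVertices p) :
    PairwiseVertexDisjoint (Fin.snoc p e : Fin (n + 1) → V × V) := by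
  have hnew : ∀ i, e.1 ≠ (p i).1 ∧ e.1 ≠ (p i).2 ∧ e.2 ≠ (p i).1 ∧ e.2 ≠ (p i).2 := by
    intro i
    refine ⟨?_, ?_, ?_, ?_⟩ <;> rintro h <;>
      simp_all [fst_mem_coveredVertices, snd_mem_coveredVertices]
  intro i j hij
  induction i using Fin.lastCases with
  | last =>
    induction j using Fin.lastCases with
    | last => exact absurd rfl hij
    | cast j => simpa using hnew j
  | cast i =>
    induction j using Fin.lastCases with
    | last =>
      simp only [Fin.snoc_last, Fin.snoc_castSucc]
      obtain ⟨h₁, h₂, h₃, h₄⟩ := hnew i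
      exact ⟨h₁.symm, h₃.symm, h₂.symm, h₄.symm⟩
    | cast j =>
      simpa using hp i j (fun h => hij (h ▸ rfl))

end Covered

theorem exists_rainbow_matching_avoiding [DecidableEq V] {k : ℕ} (H : Fin k → SimpleGraph V)
    (T : Finset V) (hmatch : ∀ i : Fin k, HasMatchingOfSize (H i) (#T + 2 * i + 1)) :
    ∃ p : Fin k → V × V, (∀ i, (H i).Adj (p i).1 (p i).2) ∧
      (∀ i, (p i).1 ∉ T ∧ (p i).2 ∉ T) ∧ PairwiseVertexDisjoint p := by
  induction k with
  | zero => exact ⟨Fin.elim0, fun i => i.elim0, fun i => i.elim0, fun i => i.elim0⟩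
  | succ k ih =>
    obtain ⟨p, hadj, havoid, hdisj⟩ := ih (fun i => H i.castSucc) fun i => by
      simpa using hmatch i.castSucc
    have hcard : #(T ∪ coveredVertices p) < #T + 2 * k + 1 := by
      have := card_union_le T (coveredVertices p)
      have := card_coveredVertices_le p
      omega
    obtain ⟨x, y, hxy, hx, hy⟩ :=
      (hmatch (Fin.last k)).exists_adj_notMem (T ∪ coveredVertices p) (by simpa using hcard)
    rw [mem_union, not_or] at hx hy
    refine ⟨Fin.snoc p (x, y), fun i => ?_, fun i => ?_, hdisj.snoc hx.2 hy.2⟩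
    · induction i using Fin.lastCases with
      | last => simpa using hxy
      | cast i => simpa using hadj i
    · induction i using Fin.lastCases with
      | last => simpa using ⟨hx.1, hy.1⟩
      | cast i => simpa using havoid i

end RainbowMatching

theorem greedy_rainbow_matching_general {V : Type*} {k : ℕ} (H : Fin k → SimpleGraph V)
    (hmatch : ∀ i : Fin k, HasMatchingOfSize (H i) (2 * ((i : ℕ) + 1)))
    (v : V) :
    ∃ p : Fin k → V × V,
      (∀ i, (H i).Adj (p i).1 (p i).2) ∧
      (∀ i, (p i).1 ≠ v ∧ (p i).2 ≠ v) ∧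
      (∀ i j, i ≠ j →
        (p i).1 ≠ (p j).1 ∧ (p i).1 ≠ (p j).2 ∧ (p i).2 ≠ (p j).1 ∧ (p i).2 ≠ (p j).2) := by
  classical
  have hmatch' : ∀ i : Fin k, HasMatchingOfSize (H i) (({v} : Finset V).card + 2 * i + 1) := fun i => by
    convert hmatch i using 1
    rw [Finset.card_singleton]
    ring
  obtain ⟨p, hadj, havoid, hdisj⟩ := exists_rainbow_matching_avoiding H {v} hmatch'
  exact ⟨p, hadj, fun i => by simpa using havoid i, hdisj⟩

/-- Let the edges of a graph be colored with `k` colors (the color classes being the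
pairwise edge-disjoint graphs `H 0, …, H (k-1)`) such that color `i` (for `i = 1, …, k`,
i.e. zero-indexed `i - 1`) contains a matching of size `2i`. Then for any vertex `v` there
is a rainbow matching of size `k` avoiding `v`: one edge of each color, pairwise
vertex-disjoint, none incident to `v`. -/
theorem greedy_rainbow_matching {V : Type*} {k : ℕ} (H : Fin k → SimpleGraph V)
    (hdisj : ∀ i j, i ≠ j → Disjoint (H i).edgeSet (H j).edgeSet)
    (hmatch : ∀ i : Fin k, HasMatchingOfSize (H i) (2 * ((i : ℕ) + 1)))
    (v : V) :
    ∃ p : Fin k → V × V,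
      (∀ i, (H i).Adj (p i).1 (p i).2) ∧
      (∀ i, (p i).1 ≠ v ∧ (p i).2 ≠ v) ∧
      (∀ i j, i ≠ j →
        (p i).1 ≠ (p j).1 ∧ (p i).1 ≠ (p j).2 ∧ (p i).2 ≠ (p j).1 ∧ (p i).2 ≠ (p j).2) :=
  greedy_rainbow_matching_general H hmatch v
end

section
/- Every tree with at least one edge and exactly m internal nodes (vertices that are not leaves) contains a matching of size at least ⌈(m+1)/2⌉. -/
open SimpleGraph

namespace TreeMatchAux
variable {V : Type*} (G : SimpleGraph V) (l : V)

open Classical in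
/-- canonical parent toward root `l` (junk value `l` when none) -/
noncomputable def par (v : V) : V :=
  if h : ∃ p, G.Adj v p ∧ G.dist p l + 1 = G.dist v l then h.choose else l

def hasChild (v : V) : Prop := ∃ c, G.Adj v c ∧ par G l c = v

open Classical in
noncomputable def pick (v : V) : V :=
  if h : hasChild G l v then h.choose else l

variable {G l}

lemma exists_parent (hc : G.Connected) {v : V} (hv : v ≠ l) :
    ∃ p, G.Adj v p ∧ G.dist p l + 1 = G.dist v l := by
  obtain ⟨w, hw⟩ := (hc v l).exists_walk_length_eq_dist
  cases w with
  | nil => exact absurd rfl hv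
  | @cons _ b _ h w' =>
    refine ⟨b, h, ?_⟩
    have h1 : G.dist b l ≤ w'.length := dist_le w'
    obtain ⟨w2, hw2⟩ := (hc b l).exists_walk_length_eq_dist
    have h2 : G.dist v l ≤ (Walk.cons h w2).length := dist_le _
    simp only [Walk.length_cons] at hw h2
    omega

lemma par_spec (hc : G.Connected) {v : V} (hv : v ≠ l) :
    G.Adj v (par G l v) ∧ G.dist (par G l v) l + 1 = G.dist v l := by
  classical
  rw [par, dif_pos (exists_parent hc hv)]
  exact (exists_parent hc hv).choose_spec

lemma par_self : par G l l = l := by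
  classical
  rw [par, dif_neg]
  rintro ⟨p, -, hp⟩
  rw [dist_self] at hp
  omega

/-- vertices on a shortest walk to `l` other than the start are strictly closer to `l` -/
lemma support_dist_lt (hc : G.Connected) {a x : V} (w : G.Walk a l)
    (hw : w.length = G.dist a l) (hx : x ∈ w.support) :
    G.dist x l < G.dist a l ∨ x = a := by
  classical
  by_cases hxa : x = a
  · exact Or.inr hxa
  left
  have hspec := w.take_spec hx
  have hlen : (w.takeUntil x hx).length + (w.dropUntil x hx).length = w.length := by
    rw [← Walk.length_append, hspec]
  have h1 : G.dist x l ≤ (w.dropUntil x hx).length := dist_le _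
  have h2 : (w.takeUntil x hx).length ≠ 0 := by
    intro h0
    exact hxa ((w.takeUntil x hx).eq_of_length_eq_zero h0).symm
  omega

/-- uniqueness of the vertex closer to `l` among neighbors, in a tree -/
lemma parent_unique (ht : G.IsTree) {v a b : V}
    (ha : G.Adj v a) (hda : G.dist a l + 1 = G.dist v l)
    (hb : G.Adj v b) (hdb : G.dist b l + 1 = G.dist v l) : a = b := by
  classical
  have hc := ht.isConnected
  obtain ⟨wa, hwa⟩ := (hc a l).exists_walk_length_eq_dist
  obtain ⟨wb, hwb⟩ := (hc b l).exists_walk_length_eq_dist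
  -- replace by bypass paths, still shortest
  have hwa' : wa.bypass.length = G.dist a l :=
    le_antisymm (hwa ▸ wa.length_bypass_le) (dist_le _)
  have hwb' : wb.bypass.length = G.dist b l :=
    le_antisymm (hwb ▸ wb.length_bypass_le) (dist_le _)
  have hva : v ∉ wa.bypass.support := by
    intro hmem
    rcases support_dist_lt hc wa.bypass hwa' hmem with h | h
    · omega
    · exact G.irrefl (h ▸ ha)
  have hvb : v ∉ wb.bypass.support := by
    intro hmem
    rcases support_dist_lt hc wb.bypass hwb' hmem with h | h
    · omega
    · exact G.irrefl (h ▸ hb)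
  have hpa : (Walk.cons ha wa.bypass).IsPath :=
    (Walk.cons_isPath_iff _ _).2 ⟨wa.bypass_isPath, hva⟩
  have hpb : (Walk.cons hb wb.bypass).IsPath :=
    (Walk.cons_isPath_iff _ _).2 ⟨wb.bypass_isPath, hvb⟩
  have := ht.IsAcyclic.path_unique ⟨_, hpa⟩ ⟨_, hpb⟩
  have heq : (Walk.cons ha wa.bypass) = (Walk.cons hb wb.bypass) := congrArg Subtype.val this
  have : (Walk.cons ha wa.bypass).getVert 1 = (Walk.cons hb wb.bypass).getVert 1 := by rw [heq]
  simpa [Walk.getVert] using this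

/-- no two adjacent vertices are equidistant from `l`, in a tree -/
lemma adj_dist_ne (ht : G.IsTree) {v c : V} (h : G.Adj v c) :
    G.dist v l ≠ G.dist c l := by
  classical
  intro hd
  have hc := ht.isConnected
  obtain ⟨wc, hwc⟩ := (hc c l).exists_walk_length_eq_dist
  have hwc' : wc.bypass.length = G.dist c l :=
    le_antisymm (hwc ▸ wc.length_bypass_le) (dist_le _)
  have hvc : v ∉ wc.bypass.support := by
    intro hmem
    rcases support_dist_lt hc wc.bypass hwc' hmem with h' | h'
    · omega
    · exact G.irrefl (h' ▸ h)
  have hp1 : (Walk.cons h wc.bypass).IsPath :=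
    (Walk.cons_isPath_iff _ _).2 ⟨wc.bypass_isPath, hvc⟩
  obtain ⟨wv, hwv⟩ := (hc v l).exists_walk_length_eq_dist
  have hwv' : wv.bypass.length = G.dist v l :=
    le_antisymm (hwv ▸ wv.length_bypass_le) (dist_le _)
  have := ht.IsAcyclic.path_unique ⟨_, hp1⟩ ⟨_, wv.bypass_isPath⟩
  have heq : (Walk.cons h wc.bypass) = wv.bypass := congrArg Subtype.val this
  have : (Walk.cons h wc.bypass).length = wv.bypass.length := by rw [heq]
  simp only [Walk.length_cons] at this
  omega

lemma pick_spec {v : V} (h : hasChild G l v) :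
    G.Adj v (pick G l v) ∧ par G l (pick G l v) = v := by
  classical
  rw [pick, dif_pos h]
  exact h.choose_spec

variable (G l) in
/-- greedy matching predicate, by recursion on depth -/
def activeAux : ℕ → V → Prop
  | 0, v => hasChild G l v
  | n+1, v => hasChild G l v ∧
      ¬(activeAux n (par G l v) ∧ pick G l (par G l v) = v)

variable (G l) in
def active (v : V) : Prop := activeAux G l (G.dist v l) v

lemma active_hasChild {v : V} (h : active G l v) : hasChild G l v := by
  unfold active at h
  cases hd : G.dist v l with
  | zero => rw [hd] at h; exact h
  | succ n => rw [hd] at h; exact h.1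

lemma active_iff (hc : G.Connected) {v : V} (hv : v ≠ l) :
    active G l v ↔ hasChild G l v ∧
      ¬(active G l (par G l v) ∧ pick G l (par G l v) = v) := by
  have hd := (par_spec hc hv).2
  unfold active
  rw [← hd]
  simp [activeAux]

lemma active_root (hc : G.Connected) (hn : ∃ c, G.Adj l c) : active G l l := by
  obtain ⟨c, hcadj⟩ := hn
  have hcl : c ≠ l := fun h => G.irrefl (h ▸ hcadj)
  have hch : hasChild G l l := by
    refine ⟨c, hcadj, ?_⟩
    obtain ⟨h1, h2⟩ := par_spec hc hcl
    have hdc : G.dist c l = 1 := dist_eq_one_iff_adj.2 hcadj.symm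
    have : G.dist (par G l c) l = 0 := by omega
    exact (hc.dist_eq_zero_iff.1 this)
  unfold active
  rw [dist_self]
  exact hch

lemma internal_hasChild (ht : G.IsTree) {v : V} (hv : v ≠ l)
    (hdeg : (G.neighborSet v).ncard ≠ 1) : hasChild G l v := by
  classical
  have hc := ht.isConnected
  obtain ⟨hadj, hd⟩ := par_spec hc hv
  have hne : G.neighborSet v ≠ {par G l v} := by
    intro h
    apply hdeg
    rw [h, Set.ncard_singleton]
  obtain ⟨c, hc1, hc2⟩ : ∃ c, c ∈ G.neighborSet v ∧ c ≠ par G l v := by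
    by_contra hcon
    push_neg at hcon
    apply hne
    apply Set.eq_of_subset_of_subset
    · intro x hx; exact hcon x hx
    · intro x hx; rw [Set.mem_singleton_iff] at hx; rw [hx]; exact hadj
  have hacj : G.Adj v c := hc1
  have h1 : G.dist c l ≠ G.dist v l := fun h => adj_dist_ne ht hacj h.symm
  have hd1 : G.dist c v = 1 := dist_eq_one_iff_adj.2 hacj.symm
  have hd2 : G.dist v c = 1 := dist_eq_one_iff_adj.2 hacj
  have h2 : G.dist c l ≤ G.dist c v + G.dist v l := hc.dist_triangle
  have h3 : G.dist v l ≤ G.dist v c + G.dist c l := hc.dist_triangle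
  have h4 : ¬ (G.dist c l + 1 = G.dist v l) := by
    intro h
    exact hc2 (parent_unique ht hacj h hadj hd)
  have h5 : G.dist v l + 1 = G.dist c l := by omega
  have hcl : c ≠ l := by
    intro h
    rw [h, dist_self] at h5
    omega
  obtain ⟨hadj', hd'⟩ := par_spec hc hcl
  exact ⟨c, hacj, (parent_unique ht hacj.symm h5 hadj' hd').symm⟩

lemma active_disj (ht : G.IsTree) {v w : V} (hv : active G l v) (hw : active G l w)
    (hvw : v ≠ w) : v ≠ pick G l w := by
  intro h
  obtain ⟨hpadj, hppar⟩ := pick_spec (active_hasChild hw)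
  rw [← h] at hppar
  have hvl : v ≠ l := by
    intro hve
    rw [hve, par_self] at hppar
    exact hvw (hve.trans hppar)
  have := ((active_iff ht.isConnected hvl).1 hv).2
  rw [hppar] at this
  exact this ⟨hw, h.symm⟩

lemma exists_adj_of_edge (hedge : G.edgeSet.Nonempty) : ∃ a b : V, G.Adj a b := by
  obtain ⟨e, he⟩ := hedge
  induction e with
  | h a b => exact ⟨a, b, G.mem_edgeSet.1 he⟩

lemma exists_leaf [Fintype V] (ht : G.IsTree) (hedge : G.edgeSet.Nonempty) :
    ∃ l : V, (G.neighborSet l).ncard = 1 := by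
  classical
  by_contra hcon
  push_neg at hcon
  have hc := ht.isConnected
  obtain ⟨a, b, hab⟩ := exists_adj_of_edge hedge
  have hcard : 1 < Fintype.card V := Fintype.one_lt_card_iff.2 ⟨a, b, hab.ne⟩
  have hdeg : ∀ v : V, 2 ≤ G.degree v := by
    intro v
    have hnb : ∃ c, G.Adj v c := by
      by_cases h : v = a
      · exact ⟨b, h ▸ hab⟩
      · obtain ⟨p, hp, -⟩ := exists_parent (l := a) hc h
        exact ⟨p, hp⟩
    have h1 : (G.neighborSet v).ncard = G.degree v := by
      rw [degree, neighborFinset_def, Set.ncard_eq_toFinset_card']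
    obtain ⟨c, hc'⟩ := hnb
    have h2 : 1 ≤ G.degree v := by
      rw [← h1]
      have : (G.neighborSet v).Nonempty := ⟨c, hc'⟩
      have := Set.ncard_pos (Set.toFinite _) |>.2 this
      omega
    have := hcon v
    omega
  have hsum : ∑ v : V, G.degree v = 2 * G.edgeFinset.card :=
    sum_degrees_eq_twice_card_edges G
  have hedges : G.edgeFinset.card + 1 = Fintype.card V := ht.card_edgeFinset
  have hge : 2 * Fintype.card V ≤ ∑ v : V, G.degree v := by
    calc 2 * Fintype.card V = ∑ _v : V, 2 := by
          rw [Finset.sum_const, Finset.card_univ, smul_eq_mul, mul_comm]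
      _ ≤ ∑ v : V, G.degree v := Finset.sum_le_sum fun v _ => hdeg v
  omega

end TreeMatchAux

/-- Every tree with at least one edge and exactly `m` internal nodes (vertices that are not
leaves) contains a matching of size at least `⌈(m+1)/2⌉`  (which equals `(m+2)/2` with
natural number division). -/
theorem tree_matching_from_internal_nodes {V : Type*} [Fintype V]
    (G : SimpleGraph V) (htree : G.IsTree) (hedge : G.edgeSet.Nonempty) (m : ℕ)
    (hm : {v : V | (G.neighborSet v).ncard ≠ 1}.ncard = m) :
    ∃ s, (m + 2) / 2 ≤ s ∧ HasMatchingOfSize G s := by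
  classical
  obtain ⟨l, hl⟩ := TreeMatchAux.exists_leaf htree hedge
  have hc := htree.isConnected
  obtain ⟨a, b, hab⟩ := TreeMatchAux.exists_adj_of_edge hedge
  have hnl : ∃ c, G.Adj l c := by
    by_cases h : l = a
    · exact ⟨b, h ▸ hab⟩
    · obtain ⟨p, hp, -⟩ := TreeMatchAux.exists_parent (l := a) hc h
      exact ⟨p, hp⟩
  have hactl : TreeMatchAux.active G l l := TreeMatchAux.active_root hc hnl
  set S : Finset V := Finset.univ.filter (fun v => TreeMatchAux.active G l v) with hS
  have hSmem : ∀ v ∈ S, TreeMatchAux.active G l v := fun v hv => (Finset.mem_filter.1 hv).2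
  refine ⟨S.card, ?_, ?_⟩
  · -- counting
    set I : Finset V := Set.toFinset {v : V | (G.neighborSet v).ncard ≠ 1} with hI
    have hmI : I.card = m := by rw [← hm, Set.ncard_eq_toFinset_card']
    have hlI : l ∉ I := by
      rw [hI, Set.mem_toFinset]
      simp only [Set.mem_setOf_eq, not_not]
      exact hl
    have hsub : insert l I ⊆ S ∪ S.image (TreeMatchAux.pick G l) := by
      intro x hx
      rcases Finset.mem_insert.1 hx with h | h
      · subst h
        exact Finset.mem_union_left _ (Finset.mem_filter.2 ⟨Finset.mem_univ _, hactl⟩)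
      · have hint : (G.neighborSet x).ncard ≠ 1 := by
          rw [hI, Set.mem_toFinset] at h; exact h
        have hxl : x ≠ l := fun hxe => hlI (hxe ▸ h)
        by_cases hax : TreeMatchAux.active G l x
        · exact Finset.mem_union_left _ (Finset.mem_filter.2 ⟨Finset.mem_univ _, hax⟩)
        · have hch := TreeMatchAux.internal_hasChild (l := l) htree hxl hint
          have hiff := TreeMatchAux.active_iff (l := l) hc hxl
          have hP : TreeMatchAux.active G l (TreeMatchAux.par G l x) ∧
              TreeMatchAux.pick G l (TreeMatchAux.par G l x) = x := by
            by_contra hQ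
            exact hax (hiff.2 ⟨hch, hQ⟩)
          refine Finset.mem_union_right _
            (Finset.mem_image.2 ⟨TreeMatchAux.par G l x, ?_, hP.2⟩)
          exact Finset.mem_filter.2 ⟨Finset.mem_univ _, hP.1⟩
    have h1 : (insert l I).card = m + 1 := by rw [Finset.card_insert_of_notMem hlI, hmI]
    have h2 : (insert l I).card ≤ S.card + S.card := by
      calc (insert l I).card ≤ (S ∪ S.image (TreeMatchAux.pick G l)).card :=
            Finset.card_le_card hsub
        _ ≤ S.card + (S.image (TreeMatchAux.pick G l)).card := Finset.card_union_le _ _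
        _ ≤ S.card + S.card := by
            have := Finset.card_image_le (s := S) (f := TreeMatchAux.pick G l); omega
    omega
  · -- the matching itself
    refine ⟨fun i => ((S.equivFin.symm i : V), TreeMatchAux.pick G l (S.equivFin.symm i : V)),
      ?_, ?_⟩
    · intro i
      exact (TreeMatchAux.pick_spec
        (TreeMatchAux.active_hasChild (hSmem _ (S.equivFin.symm i).2))).1
    · intro i j hij
      set v : V := (S.equivFin.symm i : V) with hv
      set w : V := (S.equivFin.symm j : V) with hw
      have hav : TreeMatchAux.active G l v := hSmem _ (S.equivFin.symm i).2
      have haw : TreeMatchAux.active G l w := hSmem _ (S.equivFin.symm j).2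
      have hvw : v ≠ w := by
        intro h
        apply hij
        exact S.equivFin.symm.injective (Subtype.ext h)
      refine ⟨hvw, TreeMatchAux.active_disj htree hav haw hvw, ?_, ?_⟩
      · exact fun h => (TreeMatchAux.active_disj htree haw hav hvw.symm) h.symm
      · intro h
        simp only at h
        have h1 := (TreeMatchAux.pick_spec (TreeMatchAux.active_hasChild hav)).2
        have h2 := (TreeMatchAux.pick_spec (TreeMatchAux.active_hasChild haw)).2
        rw [← hv, ← hw] at h
        rw [h] at h1
        exact hvw (h1.symm.trans h2)
end

section
/- Let D_1, …, D_k be tree degree sequences on a common set of n vertices without common leaves, and suppose every vertex has total degree exactly 2k − 1 across the k sequences (i.e., for every v, ∑_{i=1}^{k} d_v^{(i)} = 2k − 1). Then every D_i is a path degree sequence. -/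
/-- If tree degree sequences without common leaves are such that every vertex has total
degree exactly `2k - 1` across the `k` sequences, then every sequence is a path degree
sequence. -/
theorem all_paths_of_total_degree_eq {k n : ℕ} (D : Fin k → Fin n → ℕ)
    (hD : ∀ i, TreeDegSeq (D i)) (hleaves : NoCommonLeaves D)
    (htotal : ∀ v, (∑ i, D i v) + 1 = 2 * k) :
    ∀ i, PathDegSeq (D i) := by
  intro i
  have dich : ∀ v, D i v = 1 ∨ D i v = 2 := by
    intro v
    have h1 : ∀ j, 1 ≤ D j v := fun j => (hD j).1 v
    have ht := htotal v
    have hex : ∃ j, D j v = 1 := by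
      by_contra h
      push_neg at h
      have h2 : ∀ j, 2 ≤ D j v := by
        intro j; have := h1 j; have := h j; omega
      have hle : ∑ _m : Fin k, 2 ≤ ∑ m, D m v :=
        Finset.sum_le_sum (fun m _ => h2 m)
      simp [Finset.sum_const, Finset.card_univ, mul_comm] at hle
      omega
    obtain ⟨j, hj⟩ := hex
    by_cases hij : i = j
    · left; rw [hij]; exact hj
    · right
      have h2i : 2 ≤ D i v := hleaves v j i (fun h => hij h.symm) hj
      by_contra hne
      have h3 : 3 ≤ D i v := by omega
      have hmemj : j ∈ Finset.univ := Finset.mem_univ j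
      have hsplit : ∑ m, D m v = D j v + ∑ m ∈ Finset.univ.erase j, D m v :=
        (Finset.add_sum_erase _ _ hmemj).symm
      have hmemi : i ∈ Finset.univ.erase j :=
        Finset.mem_erase.mpr ⟨hij, Finset.mem_univ i⟩
      have hsplit2 : ∑ m ∈ Finset.univ.erase j, D m v
          = D i v + ∑ m ∈ (Finset.univ.erase j).erase i, D m v :=
        (Finset.add_sum_erase _ _ hmemi).symm
      have hbound : ∑ _m ∈ (Finset.univ.erase j).erase i, (2:ℕ)
          ≤ ∑ m ∈ (Finset.univ.erase j).erase i, D m v := by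
        refine Finset.sum_le_sum (fun m hm => ?_)
        have hmne : m ≠ j := (Finset.mem_erase.mp (Finset.mem_of_mem_erase hm)).1
        exact hleaves v j m (fun h => hmne h.symm) hj
      have hcard : ((Finset.univ.erase j).erase i).card = k - 2 := by
        rw [Finset.card_erase_of_mem hmemi, Finset.card_erase_of_mem hmemj,
          Finset.card_univ, Fintype.card_fin]; omega
      rw [Finset.sum_const, smul_eq_mul, hcard] at hbound
      have hi' := i.isLt
      have hj' := j.isLt
      have hk2 : 2 ≤ k := by
        by_contra hc
        push_neg at hc
        exact hij (Fin.ext (by omega))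
      omega
  refine ⟨?_, dich⟩
  have hsum := (hD i).2
  have hkey : ∑ v, (D i v + if D i v = 1 then 1 else 0) = 2 * n := by
    have hv : ∀ v, D i v + (if D i v = 1 then 1 else 0) = 2 := by
      intro v; rcases dich v with h | h <;> simp [h]
    rw [Finset.sum_congr rfl (fun v _ => hv v)]
    simp [Finset.sum_const, Finset.card_univ, mul_comm]
  rw [Finset.sum_add_distrib] at hkey
  rw [Finset.card_filter]
  omega
end
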